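/- arXiv:1604.06372 — 8 statements merged into one kernel-verified Lean document; each statement's English description precedes it below -/
import Mathlib

section
/- If a is a regular scale factor with a'(t) > 0 for all t > 0, then for every τ > 0 there exists t ∈ (0, τ) at which the inequality a(t)·a''(t)/a'(t)² < 1 is strict (equality on all of (0,τ) would force a to be exponential, contradicting a(0)=0). -/
/-!
If equality `a a'' = a'²` held on all of `(0, τ)`, then `(a / a')' = 1 - a a'' / a'² = 0` there, so
`a = c a'` for a constant `c`. This linear ODE forces `a(t) e^{-t/c}` to be constant, and since
`a(t) → a(0) = 0` as `t → 0⁺` that constant is `0`. Hence `a ≡ 0` on `(0, τ)`, contradicting `a' > 0`.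
-/

open Set Filter Topology

theorem hasDerivAt_div_deriv {f f' f'' : ℝ → ℝ} {t : ℝ} (hf : HasDerivAt f (f' t) t)
    (hf' : HasDerivAt f' (f'' t) t) (hne : f' t ≠ 0) :
    HasDerivAt (fun s => f s / f' s) (1 - f t * f'' t / f' t ^ 2) t := by
  refine (hf.div hf' hne).congr_deriv ?_
  field_simp

theorem ContDiffOn.hasDerivAt_deriv {f : ℝ → ℝ} {s : Set ℝ} {n : WithTop ℕ∞}
    (hf : ContDiffOn ℝ n f s) (hs : IsOpen s) (hn : n ≠ 0) {t : ℝ} (ht : t ∈ s) :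
    HasDerivAt f (deriv f t) t :=
  ((hf.contDiffAt (hs.mem_nhds ht)).differentiableAt hn).hasDerivAt

theorem exists_eq_const_of_hasDerivAt_zero_Ioo {f : ℝ → ℝ} {a b : ℝ}
    (hf : ∀ t ∈ Ioo a b, HasDerivAt f 0 t) : ∃ c, ∀ t ∈ Ioo a b, f t = c :=
  isOpen_Ioo.exists_is_const_of_deriv_eq_zero isPreconnected_Ioo
    (fun t ht => (hf t ht).differentiableAt.differentiableWithinAt) (fun t ht => (hf t ht).deriv)

theorem eqOn_zero_of_eq_const_mul_deriv {f f' : ℝ → ℝ} {τ c : ℝ}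
    (hf : ∀ t ∈ Ioo 0 τ, HasDerivAt f (f' t) t) (hfc : ∀ t ∈ Ioo 0 τ, f t = c * f' t)
    (hf0 : Tendsto f (𝓝[>] 0) (𝓝 0)) : EqOn f 0 (Ioo 0 τ) := by
  intro t ht
  rcases eq_or_ne c 0 with rfl | hc
  · simpa using hfc t ht
  set F : ℝ → ℝ := fun s => f s * Real.exp (-s / c)
  have hF : ∀ s ∈ Ioo 0 τ, HasDerivAt F 0 s := by
    intro s hs
    have hexp : HasDerivAt (fun s => Real.exp (-s / c)) (Real.exp (-s / c) * (-1 / c)) s :=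
      (Real.hasDerivAt_exp _).comp s (by simpa using (hasDerivAt_id s).neg.div_const c)
    refine ((hf s hs).mul hexp).congr_deriv ?_
    rw [hfc s hs]
    field_simp
    ring
  obtain ⟨k, hk⟩ := exists_eq_const_of_hasDerivAt_zero_Ioo hF
  have hF_to_zero : Tendsto F (𝓝[>] 0) (𝓝 0) := by
    simpa [F] using hf0.mul ((Real.continuous_exp.comp (continuous_neg.div_const c)).tendsto 0
      |>.mono_left nhdsWithin_le_nhds)
  have hF_to_k : Tendsto F (𝓝[>] 0) (𝓝 k) :=
    tendsto_const_nhds.congr' <| eventually_of_mem (Ioo_mem_nhdsGT (ht.1.trans ht.2))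
      fun s hs => (hk s hs).symm
  have hFt : f t * Real.exp (-t / c) = 0 := by
    rw [← tendsto_nhds_unique hF_to_k hF_to_zero]
    exact hk t ht
  simpa [Real.exp_ne_zero] using hFt

theorem regular_strict_somewhere_general (a : ℝ → ℝ)
    (ha0 : a 0 = 0)
    (hcont : ContinuousOn a (Set.Ici 0))
    (hsmooth : ContDiffOn ℝ 2 a (Set.Ioi 0))
    (hreg : ∀ t > (0:ℝ), a t * deriv (deriv a) t / (deriv a t) ^ 2 ≤ 1)
    (hpos : ∀ t > (0:ℝ), 0 < deriv a t) :
    ∀ τ > (0:ℝ), ∃ t ∈ Set.Ioo 0 τ,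
      a t * deriv (deriv a) t / (deriv a t) ^ 2 < 1 := by
  intro τ hτ
  by_contra! hge
  have hda : ∀ t ∈ Ioi (0:ℝ), HasDerivAt a (deriv a t) t :=
    fun t => hsmooth.hasDerivAt_deriv isOpen_Ioi two_ne_zero
  have hdda : ∀ t ∈ Ioi (0:ℝ), HasDerivAt (deriv a) (deriv (deriv a) t) t :=
    fun t => (hsmooth.deriv_of_isOpen (m := 1) isOpen_Ioi le_rfl).hasDerivAt_deriv isOpen_Ioi
      one_ne_zero
  have hquot : ∀ t ∈ Ioo 0 τ, HasDerivAt (fun s => a s / deriv a s) 0 t := by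
    intro t ht
    have hone := le_antisymm (hreg t ht.1) (hge t ht)
    simpa [hone] using hasDerivAt_div_deriv (hda t ht.1) (hdda t ht.1) (hpos t ht.1).ne'
  obtain ⟨c, hc⟩ := exists_eq_const_of_hasDerivAt_zero_Ioo hquot
  have hzero : EqOn a 0 (Ioo 0 τ) := by
    refine eqOn_zero_of_eq_const_mul_deriv (c := c) (fun t ht => hda t ht.1) (fun t ht => ?_) ?_
    · rw [← hc t ht, div_mul_cancel₀ _ (hpos t ht.1).ne']
    · simpa [ha0] using ((hcont 0 self_mem_Ici).tendsto).mono_left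
        (nhdsWithin_mono 0 Ioi_subset_Ici_self)
  have hmid : τ / 2 ∈ Ioo 0 τ := ⟨half_pos hτ, half_lt_self hτ⟩
  have hderiv_mid : deriv a (τ / 2) = 0 := by
    simpa using (hzero.eventuallyEq_of_mem (isOpen_Ioo.mem_nhds hmid)).deriv_eq
  exact (hpos _ hmid.1).ne' hderiv_mid

/-- For a regular scale factor with positive derivative, the regularity inequality is
strict somewhere in every interval `(0, τ)`. -/
theorem regular_strict_somewhere (a : ℝ → ℝ)
    (ha0 : a 0 = 0)
    (hmono : StrictMonoOn a (Set.Ici 0))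
    (hcont : ContinuousOn a (Set.Ici 0))
    (hsmooth : ContDiffOn ℝ 2 a (Set.Ioi 0))
    (hreg : ∀ t > (0:ℝ), a t * deriv (deriv a) t / (deriv a t) ^ 2 ≤ 1)
    (hpos : ∀ t > (0:ℝ), 0 < deriv a t) :
    ∀ τ > (0:ℝ), ∃ t ∈ Set.Ioo 0 τ,
      a t * deriv (deriv a) t / (deriv a t) ^ 2 < 1 :=
  regular_strict_somewhere_general a ha0 hcont hsmooth hreg hpos
end

section
/- If a is a regular scale factor and ∫_{t₀}^∞ dt/a(t) < ∞ for some t₀ > 0 (existence of a cosmological event horizon), then lim_{t→∞} t/a(t) = 0 and lim_{t→∞} 1/a'(t) = 0. -/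
/-!
Since `a` is increasing, `(t / 2) / a t ≤ ∫_{t/2}^t ds / a s`, and the tail integrals of the
integrable function `1 / a` tend to `0`; hence `t / a t → 0`, and in particular `a → ∞`.

The regularity condition says `a a'' ≤ a'²` (where `a' = 0`, `a'` has a local minimum, so
`a'' = 0`), i.e. `a' / a` is nonincreasing. Hence for `s ≥ t` we have
`1 / a s ≥ (a t / a' t) · a' s / (a s)²`, and integrating over `(t, ∞)` gives
`1 / a' t ≤ ∫_t^∞ ds / a s → 0`.
-/

open Set Filter MeasureTheory
open scoped Topology

lemma tendsto_setIntegral_Ioi_atTop {f : ℝ → ℝ} {t₀ : ℝ} (hf : IntegrableOn f (Ioi t₀)) :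
    Tendsto (fun t => ∫ s in Ioi t, f s) atTop (𝓝 0) := by
  have hempty : ⋂ t : ℝ, Ioi t = ∅ := iInter_eq_empty_iff.2 fun x => ⟨x, lt_irrefl x⟩
  simpa [hempty] using tendsto_setIntegral_of_antitone (fun _ => measurableSet_Ioi)
    (fun _ _ h => Ioi_subset_Ioi h) ⟨t₀, hf⟩

lemma sub_div_le_setIntegral_Ioi_one_div {a : ℝ → ℝ} {t₀ u t : ℝ}
    (hmono : MonotoneOn a (Ioi t₀)) (hpos : ∀ s ∈ Ioi t₀, 0 < a s)
    (hint : IntegrableOn (fun s => 1 / a s) (Ioi t₀)) (hu : t₀ ≤ u) (hut : u ≤ t) :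
    (t - u) / a t ≤ ∫ s in Ioi u, 1 / a s := by
  have hIoc : Ioc u t ⊆ Ioi t₀ := fun s hs => lt_of_le_of_lt hu hs.1
  calc (t - u) / a t = volume.real (Ioc u t) • (1 / a t) := by
        rw [Real.volume_real_Ioc_of_le hut, smul_eq_mul, mul_one_div]
    _ ≤ ∫ s in Ioc u t, 1 / a s :=
        setIntegral_ge_of_const_le measurableSet_Ioc measure_Ioc_lt_top.ne
          (fun s hs => one_div_le_one_div_of_le (hpos s (hIoc hs))
            (hmono (hIoc hs) (hIoc ⟨hs.1.trans_le hs.2, le_rfl⟩) hs.2)) (hint.mono_set hIoc)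
    _ ≤ ∫ s in Ioi u, 1 / a s :=
        setIntegral_mono_set (hint.mono_set (Ioi_subset_Ioi hu))
          (ae_restrict_of_forall_mem measurableSet_Ioi fun s hs =>
            one_div_nonneg.2 (hpos s (lt_of_le_of_lt hu hs)).le)
          Ioc_subset_Ioi_self.eventuallyLE

lemma tendsto_div_of_integrableOn_one_div {a : ℝ → ℝ} {t₀ : ℝ}
    (hmono : MonotoneOn a (Ioi t₀)) (hpos : ∀ s ∈ Ioi t₀, 0 < a s)
    (hint : IntegrableOn (fun s => 1 / a s) (Ioi t₀)) :
    Tendsto (fun t => t / a t) atTop (𝓝 0) := by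
  have htail : Tendsto (fun t => 2 * ∫ s in Ioi (t / 2), 1 / a s) atTop (𝓝 0) := by
    simpa using ((tendsto_setIntegral_Ioi_atTop hint).comp
      (tendsto_id.atTop_div_const two_pos)).const_mul 2
  refine squeeze_zero' ?_ ?_ htail
  · filter_upwards [eventually_gt_atTop (max t₀ 0)] with t ht
    obtain ⟨ht₀, ht⟩ := max_lt_iff.1 ht
    exact div_nonneg ht.le (hpos t ht₀).le
  · filter_upwards [eventually_ge_atTop (2 * |t₀|)] with t ht
    have h := sub_div_le_setIntegral_Ioi_one_div hmono hpos hint (u := t / 2) (t := t)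
      (by linarith [le_abs_self t₀]) (by linarith [abs_nonneg t₀])
    rw [show t - t / 2 = t / 2 by ring, div_right_comm] at h
    linarith

lemma tendsto_atTop_of_tendsto_div {a : ℝ → ℝ} (hpos : ∀ᶠ t in atTop, 0 < a t)
    (h : Tendsto (fun t => t / a t) atTop (𝓝 0)) : Tendsto a atTop atTop := by
  refine tendsto_atTop_mono' atTop ?_ tendsto_id
  filter_upwards [hpos, h.eventually (gt_mem_nhds one_pos)] with t hat hlt
  rw [div_lt_one hat] at hlt
  exact hlt.le

lemma deriv_nonneg_of_monotoneOn {f : ℝ → ℝ} {s : Set ℝ} {x : ℝ} (hs : IsOpen s)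
    (hf : MonotoneOn f s) (hx : x ∈ s) : 0 ≤ deriv f x := by
  rw [← derivWithin_of_isOpen hs hx]
  exact hf.derivWithin_nonneg

lemma mul_deriv_deriv_le_sq {a : ℝ → ℝ} {s : Set ℝ} {t : ℝ} (hs : IsOpen s)
    (hmono : MonotoneOn a s) (hreg : ∀ t ∈ s, a t * deriv (deriv a) t / deriv a t ^ 2 ≤ 1)
    (ht : t ∈ s) : a t * deriv (deriv a) t ≤ deriv a t ^ 2 := by
  rcases eq_or_ne (deriv a t) 0 with h0 | h0
  · have hmin : IsLocalMin (deriv a) t := by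
      filter_upwards [hs.mem_nhds ht] with u hu
      rw [h0]
      exact deriv_nonneg_of_monotoneOn hs hmono hu
    simp [hmin.deriv_eq_zero, h0]
  · rw [← div_le_one (by positivity)]
    exact hreg t ht

lemma antitoneOn_deriv_div_self {a : ℝ → ℝ} {s : Set ℝ} (hs : IsOpen s) (hconv : Convex ℝ s)
    (hsmooth : ContDiffOn ℝ 2 a s) (hpos : ∀ t ∈ s, 0 < a t)
    (hle : ∀ t ∈ s, a t * deriv (deriv a) t ≤ deriv a t ^ 2) :
    AntitoneOn (fun t => deriv a t / a t) s := by
  have hdiff : DifferentiableOn ℝ a s := hsmooth.differentiableOn (by norm_num)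
  have hdiff' : DifferentiableOn ℝ (deriv a) s :=
    (hsmooth.deriv_of_isOpen hs (by norm_num : (1 : WithTop ℕ∞) + 1 ≤ 2)).differentiableOn
      one_ne_zero
  have hderiv : ∀ t ∈ s, HasDerivAt (fun u => deriv a u / a u)
      ((deriv (deriv a) t * a t - deriv a t * deriv a t) / a t ^ 2) t := fun t ht =>
    ((hdiff' t ht).differentiableAt (hs.mem_nhds ht)).hasDerivAt.div
      ((hdiff t ht).differentiableAt (hs.mem_nhds ht)).hasDerivAt (hpos t ht).ne'
  refine antitoneOn_of_deriv_nonpos hconv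
    (fun t ht => (hderiv t ht).continuousAt.continuousWithinAt) ?_ ?_ <;> rw [hs.interior_eq]
  · exact fun t ht => (hderiv t ht).differentiableAt.differentiableWithinAt
  · intro t ht
    rw [(hderiv t ht).deriv]
    exact div_nonpos_of_nonpos_of_nonneg (by nlinarith [hle t ht]) (sq_nonneg _)

lemma one_div_deriv_le_setIntegral_Ioi {a : ℝ → ℝ} {t : ℝ}
    (hdiff : ∀ s ≥ t, DifferentiableAt ℝ a s) (hpos : ∀ s ≥ t, 0 < a s)
    (hderiv : ∀ s ≥ t, 0 ≤ deriv a s) (hanti : ∀ s ≥ t, deriv a s / a s ≤ deriv a t / a t)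
    (hatop : Tendsto a atTop atTop) (hint : IntegrableOn (fun s => 1 / a s) (Ioi t)) :
    1 / deriv a t ≤ ∫ s in Ioi t, 1 / a s := by
  rcases (hderiv t le_rfl).eq_or_lt with h0 | hderiv_pos
  · rw [← h0, div_zero]
    exact setIntegral_nonneg measurableSet_Ioi fun s hs => one_div_nonneg.2 (hpos s hs.out.le).le
  have hbound : ∀ s ≥ t, deriv a s / a s ^ 2 ≤ deriv a t / a t * (1 / a s) := fun s hs => by
    rw [pow_two, ← div_div, mul_one_div]
    exact div_le_div_of_nonneg_right (hanti s hs) (hpos s hs).le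
  have hint' : IntegrableOn (fun s => deriv a s / a s ^ 2) (Ioi t) := by
    have hmeas : AEMeasurable a (volume.restrict (Ioi t)) :=
      ContinuousOn.aemeasurable (fun s hs => (hdiff s hs.out.le).continuousAt.continuousWithinAt)
        measurableSet_Ioi
    refine (hint.const_mul (deriv a t / a t)).mono'
      ((measurable_deriv a).aemeasurable.div (hmeas.pow_const 2)).aestronglyMeasurable
      (ae_restrict_of_forall_mem measurableSet_Ioi fun s hs => ?_)
    rw [Real.norm_of_nonneg (div_nonneg (hderiv s hs.out.le) (sq_nonneg _))]
    exact hbound s hs.out.le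
  have hFTC : ∫ s in Ioi t, deriv a s / a s ^ 2 = 1 / a t := by
    have := integral_Ioi_of_hasDerivAt_of_tendsto' (f := fun s => -(a s)⁻¹) (m := 0)
      (fun s hs => by
        simpa [neg_div] using ((hdiff s hs).hasDerivAt.fun_inv (hpos s hs).ne').fun_neg)
      hint'
      (by simpa using (tendsto_inv_atTop_zero.comp hatop).neg)
    simpa using this
  have hat := (hpos t le_rfl).ne'
  calc 1 / deriv a t = ∫ s in Ioi t, a t / deriv a t * (deriv a s / a s ^ 2) := by
        rw [integral_const_mul, hFTC]
        field_simp
    _ ≤ ∫ s in Ioi t, 1 / a s := by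
        refine setIntegral_mono_on (hint'.const_mul _) hint measurableSet_Ioi fun s hs => ?_
        calc a t / deriv a t * (deriv a s / a s ^ 2)
            ≤ a t / deriv a t * (deriv a t / a t * (1 / a s)) := by
              gcongr
              · exact (div_pos (hpos t le_rfl) hderiv_pos).le
              · exact hbound s hs.out.le
          _ = 1 / a s := by field_simp

theorem cosmological_horizon_limits_general (a : ℝ → ℝ)
    (ha0 : a 0 = 0)
    (hmono : StrictMonoOn a (Set.Ici 0))
    (hsmooth : ContDiffOn ℝ 2 a (Set.Ioi 0))
    (hreg : ∀ t > (0:ℝ), a t * deriv (deriv a) t / (deriv a t) ^ 2 ≤ 1)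
    (t₀ : ℝ) (ht₀ : 0 < t₀)
    (hhoriz : MeasureTheory.IntegrableOn (fun t => 1 / a t) (Set.Ioi t₀)) :
    Filter.Tendsto (fun t => t / a t) Filter.atTop (nhds 0) ∧
    Filter.Tendsto (fun t => 1 / deriv a t) Filter.atTop (nhds 0) := by
  have hpos : ∀ t ∈ Ioi (0 : ℝ), 0 < a t := fun t ht =>
    ha0 ▸ hmono self_mem_Ici (mem_Ici.2 (le_of_lt ht)) ht
  have hmono' : MonotoneOn a (Ioi 0) := (hmono.mono Ioi_subset_Ici_self).monotoneOn
  have hdiff : ∀ t ∈ Ioi (0 : ℝ), DifferentiableAt ℝ a t := fun t ht =>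
    (hsmooth.differentiableOn two_ne_zero t ht).differentiableAt (isOpen_Ioi.mem_nhds ht)
  have hlim := tendsto_div_of_integrableOn_one_div (hmono'.mono (Ioi_subset_Ioi ht₀.le))
    (fun t ht => hpos t (ht₀.trans ht)) hhoriz
  have hatop := tendsto_atTop_of_tendsto_div ((eventually_gt_atTop 0).mono hpos) hlim
  have hanti := antitoneOn_deriv_div_self isOpen_Ioi (convex_Ioi 0) hsmooth hpos
    fun t ht => mul_deriv_deriv_le_sq isOpen_Ioi hmono' hreg ht
  refine ⟨hlim, squeeze_zero' ?_ ?_ (tendsto_setIntegral_Ioi_atTop hhoriz)⟩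
  · filter_upwards [eventually_gt_atTop 0] with t ht
    exact one_div_nonneg.2 (deriv_nonneg_of_monotoneOn isOpen_Ioi hmono' ht)
  · filter_upwards [eventually_gt_atTop t₀] with t ht
    have hge : ∀ s ≥ t, s ∈ Ioi (0 : ℝ) := fun s hs => (ht₀.trans ht).trans_le hs
    exact one_div_deriv_le_setIntegral_Ioi (fun s hs => hdiff s (hge s hs))
      (fun s hs => hpos s (hge s hs))
      (fun s hs => deriv_nonneg_of_monotoneOn isOpen_Ioi hmono' (hge s hs))
      (fun s hs => hanti (hge t le_rfl) (hge s hs) hs) hatop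
      (hhoriz.mono_set (Ioi_subset_Ioi ht.le))

/-- If a regular scale factor has a cosmological event horizon, then `t / a t → 0`
and `1 / a' t → 0` as `t → ∞`. -/
theorem cosmological_horizon_limits (a : ℝ → ℝ)
    (ha0 : a 0 = 0)
    (hmono : StrictMonoOn a (Set.Ici 0))
    (hcont : ContinuousOn a (Set.Ici 0))
    (hsmooth : ContDiffOn ℝ 2 a (Set.Ioi 0))
    (hreg : ∀ t > (0:ℝ), a t * deriv (deriv a) t / (deriv a t) ^ 2 ≤ 1)
    (t₀ : ℝ) (ht₀ : 0 < t₀)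
    (hhoriz : MeasureTheory.IntegrableOn (fun t => 1 / a t) (Set.Ioi t₀)) :
    Filter.Tendsto (fun t => t / a t) Filter.atTop (nhds 0) ∧
    Filter.Tendsto (fun t => 1 / deriv a t) Filter.atTop (nhds 0) :=
  cosmological_horizon_limits_general a ha0 hmono hsmooth hreg t₀ ht₀ hhoriz
end

section
/- If a is a regular scale factor with cosmological event horizon (∫_{t₀}^∞ dt/a(t) < ∞), then a experiences inflationary periods at arbitrarily large times: for any N > 0 there is a nonempty open interval (c,d) with c > N on which a''(t) > 0. -/
/-! A scale factor that stops inflating at some time is concave from then on, hence lies below a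
tangent line and grows at most linearly, `a t ≤ K t`. Then `1 / a t ≥ 1 / (K t)` eventually, and
`∫ dt / t` diverges, so there can be no event horizon. -/

open Set Filter MeasureTheory

lemma nonpos_of_forall_exists_mem_Ioo_nonpos {f : ℝ → ℝ} {N : ℝ}
    (hf : ContinuousOn f (Ioi N))
    (h : ∀ c d, N < c → c < d → ∃ t ∈ Ioo c d, f t ≤ 0) :
    ∀ t ∈ Ioi N, f t ≤ 0 := by
  intro t ht
  by_contra! hft
  have hnhds : {x | 0 < f x} ∈ nhds t :=
    (hf.continuousAt (Ioi_mem_nhds ht)).eventually (lt_mem_nhds hft)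
  obtain ⟨d, htd, hsub⟩ := exists_Ico_subset_of_mem_nhds hnhds ⟨t + 1, lt_add_one t⟩
  obtain ⟨u, hu, hfu⟩ := h t d ht htd
  exact hfu.not_gt (hsub (Ioo_subset_Ico_self hu))

lemma le_add_deriv_mul_of_deriv2_nonpos {f : ℝ → ℝ} {r : ℝ} (hf : ContDiffOn ℝ 2 f (Ioi r))
    (hf'' : ∀ x ∈ Ioi r, deriv (deriv f) x ≤ 0) {s t : ℝ} (hs : r < s) (hst : s < t) :
    f t ≤ f s + deriv f s * (t - s) := by
  have hf' : ContDiffOn ℝ 1 (deriv f) (Ioi r) := hf.deriv_of_isOpen isOpen_Ioi (by norm_num)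
  have hconcave : ConcaveOn ℝ (Ioi r) f := by
    refine concaveOn_of_deriv2_nonpos (convex_Ioi r) hf.continuousOn ?_ ?_ ?_ <;>
      rw [interior_Ioi]
    · exact hf.differentiableOn (by norm_num)
    · exact hf'.differentiableOn one_ne_zero
    · exact hf''
  have hslope := hconcave.slope_le_deriv hs (hs.trans hst) hst
    ((hf.differentiableOn (by norm_num) s hs).differentiableAt (Ioi_mem_nhds hs))
  rw [slope_def_field, div_le_iff₀ (sub_pos.mpr hst)] at hslope
  linarith

lemma exists_eventually_le_mul_of_deriv2_nonpos {f : ℝ → ℝ} {r : ℝ}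
    (hf : ContDiffOn ℝ 2 f (Ioi r)) (hf'' : ∀ x ∈ Ioi r, deriv (deriv f) x ≤ 0) :
    ∃ K, ∀ᶠ t in atTop, f t ≤ K * t := by
  set s := max r 0 + 1
  have hrs : r < s := by grind
  have hs : 0 < s := by positivity
  refine ⟨|f s| / s + |deriv f s|, ?_⟩
  filter_upwards [eventually_gt_atTop s] with t hst
  have hvalue : f s ≤ |f s| / s * t := calc
    f s ≤ |f s| := le_abs_self _
    _ = |f s| / s * s := (div_mul_cancel₀ _ hs.ne').symm
    _ ≤ |f s| / s * t := by gcongr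
  have hslope : deriv f s * (t - s) ≤ |deriv f s| * t := calc
    deriv f s * (t - s) ≤ |deriv f s| * (t - s) :=
      mul_le_mul_of_nonneg_right (le_abs_self _) (by linarith)
    _ ≤ |deriv f s| * t := by gcongr; linarith
  rw [add_mul]
  linarith [le_add_deriv_mul_of_deriv2_nonpos hf hf'' hrs hst]

lemma not_integrableOn_Ioi_one_div_of_eventually_le_mul {f : ℝ → ℝ} {K : ℝ}
    (hpos : ∀ᶠ t in atTop, 0 < f t) (hle : ∀ᶠ t in atTop, f t ≤ K * t) (r : ℝ) :
    ¬ IntegrableOn (fun t => 1 / f t) (Ioi r) := by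
  intro hint
  obtain ⟨s, hs⟩ := eventually_atTop.mp (hpos.and (hle.and (eventually_gt_atTop (max r 0))))
  obtain ⟨hfs, hfsK, hs_gt⟩ := hs s le_rfl
  have hrs : r < s := (le_max_left r 0).trans_lt hs_gt
  have hs0 : 0 < s := (le_max_right r 0).trans_lt hs_gt
  have hK : 0 < K := pos_of_mul_pos_left (hfs.trans_le hfsK) hs0.le
  have hinv : IntegrableOn (fun t => K⁻¹ * t⁻¹) (Ici s) := by
    refine Integrable.mono' (hint.mono_set (Ici_subset_Ioi.mpr hrs)) ?_ ?_
    · exact (continuousOn_const.mul (continuousOn_inv₀.mono fun t ht => (hs0.trans_le ht).ne'))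
        |>.aestronglyMeasurable measurableSet_Ici
    · filter_upwards [ae_restrict_mem measurableSet_Ici] with t ht
      obtain ⟨hft, hftK, -⟩ := hs t ht
      rw [Real.norm_of_nonneg (by positivity [hs0.trans_le ht]), ← mul_inv, ← one_div]
      exact one_div_le_one_div_of_le hft hftK
  exact not_integrableOn_Ici_inv
    (IntegrableOn.congr_fun (hinv.const_mul K) (fun t _ => by simp [hK.ne']) measurableSet_Ici)

theorem cosmological_horizon_inflation_general (a : ℝ → ℝ)
    (ha0 : a 0 = 0)
    (hmono : StrictMonoOn a (Set.Ici 0))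
    (hsmooth : ContDiffOn ℝ 2 a (Set.Ioi 0))
    (t₀ : ℝ)
    (hhoriz : MeasureTheory.IntegrableOn (fun t => 1 / a t) (Set.Ioi t₀)) :
    ∀ N > (0:ℝ), ∃ c d : ℝ, N < c ∧ c < d ∧
      ∀ t ∈ Set.Ioo c d, 0 < deriv (deriv a) t := by
  by_contra! hno_inflation
  obtain ⟨N, hN, hno_inflation⟩ := hno_inflation
  have hpos : ∀ t > 0, 0 < a t := fun t ht => ha0 ▸ hmono self_mem_Ici ht.le ht
  have hsmoothN := hsmooth.mono (Ioi_subset_Ioi hN.le)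
  have hconcave : ∀ t ∈ Ioi N, deriv (deriv a) t ≤ 0 :=
    nonpos_of_forall_exists_mem_Ioo_nonpos
      ((hsmoothN.deriv_of_isOpen isOpen_Ioi (by norm_num)).continuousOn_deriv_of_isOpen
        isOpen_Ioi le_rfl) hno_inflation
  obtain ⟨K, hK⟩ := exists_eventually_le_mul_of_deriv2_nonpos hsmoothN hconcave
  exact not_integrableOn_Ioi_one_div_of_eventually_le_mul
    ((eventually_gt_atTop 0).mono hpos) hK t₀ hhoriz

/-- If a regular scale factor has a cosmological event horizon, then there are
inflationary periods at arbitrarily large times. -/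
theorem cosmological_horizon_inflation (a : ℝ → ℝ)
    (ha0 : a 0 = 0)
    (hmono : StrictMonoOn a (Set.Ici 0))
    (hcont : ContinuousOn a (Set.Ici 0))
    (hsmooth : ContDiffOn ℝ 2 a (Set.Ioi 0))
    (hreg : ∀ t > (0:ℝ), a t * deriv (deriv a) t / (deriv a t) ^ 2 ≤ 1)
    (t₀ : ℝ) (ht₀ : 0 < t₀)
    (hhoriz : MeasureTheory.IntegrableOn (fun t => 1 / a t) (Set.Ioi t₀)) :
    ∀ N > (0:ℝ), ∃ c d : ℝ, N < c ∧ c < d ∧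
      ∀ t ∈ Set.Ioo c d, 0 < deriv (deriv a) t :=
  cosmological_horizon_inflation_general a ha0 hmono hsmooth t₀ hhoriz
end

section
/- If a is a regular scale factor with a finite particle horizon, i.e. ∫_0^τ dt/a(t) < ∞ for some τ > 0, then lim_{t→0⁺} t/a(t) = 0 and lim_{t→0⁺} 1/a'(t) = 0. -/
/-!
Since `a` is increasing, `t / a(t) ≤ ∫₀ᵗ du / a(u)`, and the right side tends to `0` with `t`
because `1 / a` is integrable near `0`.

The regularity condition says that `log a` is concave, i.e. `a' / a` is nonincreasing; as `a` is
strictly increasing this forces `a' > 0`. The condition then reads `(1 / a')' ≥ -1 / a`, so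
`1 / a'(s) ≤ 1 / a'(ξ) + ∫ₛ^ξ du / a(u)` for `s ≤ ξ`. Taking `ξ ∈ (0, t)` from the mean value
theorem on `[0, t]`, where `1 / a'(ξ) = t / a(t)`, bounds `1 / a'` on `(0, ξ)` by
`t / a(t) + ∫₀ᵗ du / a(u)`, which tends to `0`.
-/

open Set Filter Topology MeasureTheory

theorem MonotoneOn.deriv_nonneg_of_isOpen {f : ℝ → ℝ} {s : Set ℝ} {x : ℝ}
    (hf : MonotoneOn f s) (hs : IsOpen s) (hx : x ∈ s) : 0 ≤ deriv f x := by
  rw [← derivWithin_of_isOpen hs hx]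
  exact hf.derivWithin_nonneg

theorem ContDiffOn.hasDerivAt_of_isOpen {f : ℝ → ℝ} {s : Set ℝ} {x : ℝ}
    {n : WithTop ℕ∞} (hf : ContDiffOn ℝ n f s) (hn : n ≠ 0) (hs : IsOpen s) (hx : x ∈ s) :
    HasDerivAt f (deriv f x) x :=
  ((hf.differentiableOn hn).differentiableAt (hs.mem_nhds hx)).hasDerivAt

theorem tendsto_zero_of_eventually_le_of_tendsto {α β : Type*} {l : Filter α} {l' : Filter β}
    [l'.NeBot] {f : α → ℝ} {g : β → ℝ} (hf : 0 ≤ᶠ[l] f) (hg : Tendsto g l' (𝓝 0))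
    (hfg : ∀ᶠ t in l', ∀ᶠ s in l, f s ≤ g t) : Tendsto f l (𝓝 0) := by
  refine tendsto_order.2 ⟨fun ε hε => hf.mono fun s hs => hε.trans_le hs, fun ε hε => ?_⟩
  obtain ⟨t, hgt, hft⟩ := ((hg.eventually (gt_mem_nhds hε)).and hfg).exists
  exact hft.mono fun s hs => hs.trans_lt hgt

theorem tendsto_intervalIntegral_nhdsGT {f : ℝ → ℝ} {b c : ℝ} (hbc : b < c)
    (hf : IntegrableOn f (Ioc b c)) :
    Tendsto (fun t => ∫ x in b..t, f x) (𝓝[>] b) (𝓝 0) := by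
  have hcont := intervalIntegral.continuousOn_primitive_interval'
    ((intervalIntegrable_iff_integrableOn_Ioc_of_le hbc.le).2 hf) left_mem_uIcc b left_mem_uIcc
  rw [uIcc_of_le hbc.le, ← nhdsWithin_Ioc_eq_nhdsGT hbc] at *
  simpa using hcont.tendsto.mono_left (nhdsWithin_mono b Ioc_subset_Icc_self)

/-- The regularity condition reads `a a'' ≤ a'²` wherever `a' ≠ 0`; at a zero of `a' ≥ 0` the
derivative `a'` is minimal, so `a'' = 0` and the product form still holds. -/
theorem mul_deriv_deriv_le_deriv_sq {a : ℝ → ℝ} {t : ℝ} (hnn : 0 ≤ᶠ[𝓝 t] deriv a)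
    (hreg : a t * deriv (deriv a) t / deriv a t ^ 2 ≤ 1) :
    a t * deriv (deriv a) t ≤ deriv a t ^ 2 := by
  by_cases h : deriv a t = 0
  · have hmin : IsLocalMin (deriv a) t := hnn.mono fun u hu => h ▸ hu
    simp [h, hmin.deriv_eq_zero]
  · exact (div_le_one (by positivity)).1 hreg

section ScaleFactor

variable {a : ℝ → ℝ}

theorem antitoneOn_deriv_div (hsmooth : ContDiffOn ℝ 2 a (Ioi 0)) (hpos : ∀ t > 0, 0 < a t)
    (hreg : ∀ t > 0, a t * deriv (deriv a) t ≤ deriv a t ^ 2) :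
    AntitoneOn (fun t => deriv a t / a t) (Ioi 0) := by
  have hderiv : ∀ t ∈ Ioi (0 : ℝ), HasDerivAt (fun t => deriv a t / a t)
      ((deriv (deriv a) t * a t - deriv a t * deriv a t) / a t ^ 2) t := fun t ht =>
    ((hsmooth.deriv_of_isOpen isOpen_Ioi le_rfl).hasDerivAt_of_isOpen one_ne_zero isOpen_Ioi
      ht).div (hsmooth.hasDerivAt_of_isOpen two_ne_zero isOpen_Ioi ht) (hpos t ht).ne'
  refine antitoneOn_of_deriv_nonpos (convex_Ioi 0)
    (fun t ht => (hderiv t ht).continuousAt.continuousWithinAt) ?_ fun t ht => ?_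
  · rw [interior_Ioi]
    exact fun t ht => (hderiv t ht).differentiableAt.differentiableWithinAt
  · rw [interior_Ioi] at ht
    rw [(hderiv t ht).deriv]
    exact div_nonpos_of_nonpos_of_nonneg (by nlinarith [hreg t ht]) (by positivity)

theorem deriv_pos_of_antitoneOn_deriv_div (hmono : StrictMonoOn a (Ioi 0))
    (hdiff : DifferentiableOn ℝ a (Ioi 0)) (hpos : ∀ t > 0, 0 < a t)
    (hanti : AntitoneOn (fun t => deriv a t / a t) (Ioi 0)) {t : ℝ} (ht : 0 < t) :
    0 < deriv a t := by
  have hsub : Icc t (t + 1) ⊆ Ioi 0 := fun u hu => ht.trans_le hu.1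
  obtain ⟨c, hc, hc_slope⟩ := exists_deriv_eq_slope a (lt_add_one t)
    (hdiff.continuousOn.mono hsub) (hdiff.mono (Ioo_subset_Icc_self.trans hsub))
  have hc0 : 0 < c := ht.trans hc.1
  have hdc : 0 < deriv a c := by
    rw [hc_slope]
    exact div_pos (sub_pos.2 (hmono ht (ht.trans (lt_add_one t)) (lt_add_one t))) (by linarith)
  have := hanti ht hc0 hc.1.le
  exact (div_pos_iff_of_pos_right (hpos t ht)).1 ((div_pos hdc (hpos c hc0)).trans_le this)

theorem one_div_deriv_sub_le_integral (hsmooth : ContDiffOn ℝ 2 a (Ioi 0))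
    (hpos : ∀ t > 0, 0 < a t) (hdpos : ∀ t > 0, 0 < deriv a t)
    (hreg : ∀ t > 0, a t * deriv (deriv a) t ≤ deriv a t ^ 2) {s t : ℝ} (hs : 0 < s)
    (hst : s ≤ t) : 1 / deriv a s - 1 / deriv a t ≤ ∫ u in s..t, 1 / a u := by
  have hsub : Icc s t ⊆ Ioi 0 := fun u hu => hs.trans_le hu.1
  have hderiv : ∀ u ∈ Ioi (0 : ℝ), HasDerivAt (fun u => -(deriv a u)⁻¹)
      (-(-deriv (deriv a) u / deriv a u ^ 2)) u := fun u hu =>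
    (((hsmooth.deriv_of_isOpen isOpen_Ioi le_rfl).hasDerivAt_of_isOpen one_ne_zero isOpen_Ioi
      hu).inv (hdpos u hu).ne').neg
  have hle := intervalIntegral.sub_le_integral_of_hasDeriv_right_of_le (φ := fun u => 1 / a u) hst
    (fun u hu => (hderiv u (hsub hu)).continuousAt.continuousWithinAt)
    (fun u hu => (hderiv u (hsub (Ioo_subset_Icc_self hu))).hasDerivWithinAt)
    ((continuousOn_const.div (hsmooth.continuousOn.mono hsub) fun u hu =>
      (hpos u (hsub hu)).ne').integrableOn_Icc) fun u hu => by
      have hu0 : 0 < u := hs.trans hu.1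
      have hd2 : 0 < deriv a u ^ 2 := pow_pos (hdpos u hu0) 2
      rw [neg_div, neg_neg, div_le_div_iff₀ hd2 (hpos u hu0)]
      linarith [hreg u hu0]
  simp only [one_div] at hle ⊢
  linarith

theorem div_le_integral_one_div {t : ℝ} (ht : 0 < t) (hmono : MonotoneOn a (Ioc 0 t))
    (hpos : ∀ u ∈ Ioc 0 t, 0 < a u) (hint : IntervalIntegrable (fun u => 1 / a u) volume 0 t) :
    t / a t ≤ ∫ u in 0..t, 1 / a u :=
  calc t / a t = ∫ _ in 0..t, 1 / a t := by simp [div_eq_mul_inv]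
    _ ≤ ∫ u in 0..t, 1 / a u :=
      intervalIntegral.integral_mono_on_of_le_Ioo ht.le intervalIntegrable_const hint
        fun u hu => one_div_le_one_div_of_le (hpos u (Ioo_subset_Ioc_self hu))
          (hmono (Ioo_subset_Ioc_self hu) (right_mem_Ioc.2 ht) hu.2.le)

theorem eventually_one_div_deriv_le (ha0 : a 0 = 0) (hsmooth : ContDiffOn ℝ 2 a (Ioi 0))
    (hpos : ∀ t > 0, 0 < a t) (hdpos : ∀ t > 0, 0 < deriv a t)
    (hreg : ∀ t > 0, a t * deriv (deriv a) t ≤ deriv a t ^ 2) {t : ℝ} (ht : 0 < t)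
    (hcont : ContinuousOn a (Icc 0 t)) (hint : IntervalIntegrable (fun u => 1 / a u) volume 0 t) :
    ∀ᶠ s in 𝓝[>] 0, 1 / deriv a s ≤ t / a t + ∫ u in 0..t, 1 / a u := by
  obtain ⟨ξ, hξ, hξ_slope⟩ := exists_deriv_eq_slope a ht hcont
    ((hsmooth.differentiableOn two_ne_zero).mono Ioo_subset_Ioi_self)
  filter_upwards [Ioo_mem_nhdsGT hξ.1] with s hs
  have hkey := one_div_deriv_sub_le_integral hsmooth hpos hdpos hreg hs.1 hs.2.le
  have hsub : ∫ u in s..ξ, 1 / a u ≤ ∫ u in 0..t, 1 / a u :=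
    intervalIntegral.integral_mono_interval hs.1.le hs.2.le hξ.2.le
      ((ae_restrict_iff' measurableSet_Ioc).2 (Eventually.of_forall fun u hu =>
        (one_div_pos.2 (hpos u hu.1)).le)) hint
  rw [hξ_slope, ha0, sub_zero, sub_zero, one_div_div] at hkey
  linarith

end ScaleFactor

/-- If a regular scale factor has a finite particle horizon, then `t / a t → 0`
and `1 / a' t → 0` as `t → 0⁺`. -/
theorem finite_particle_horizon_limits (a : ℝ → ℝ)
    (ha0 : a 0 = 0)
    (hmono : StrictMonoOn a (Set.Ici 0))
    (hcont : ContinuousOn a (Set.Ici 0))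
    (hsmooth : ContDiffOn ℝ 2 a (Set.Ioi 0))
    (hreg : ∀ t > (0:ℝ), a t * deriv (deriv a) t / (deriv a t) ^ 2 ≤ 1)
    (τ : ℝ) (hτ : 0 < τ)
    (hpart : MeasureTheory.IntegrableOn (fun t => 1 / a t) (Set.Ioc 0 τ)) :
    Filter.Tendsto (fun t => t / a t) (nhdsWithin 0 (Set.Ioi 0)) (nhds 0) ∧
    Filter.Tendsto (fun t => 1 / deriv a t) (nhdsWithin 0 (Set.Ioi 0)) (nhds 0) := by
  have hpos : ∀ t > 0, 0 < a t := fun t ht => ha0 ▸ hmono self_mem_Ici (le_of_lt ht) ht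
  have hmono' : StrictMonoOn a (Ioi 0) := hmono.mono Ioi_subset_Ici_self
  have hreg' : ∀ t > 0, a t * deriv (deriv a) t ≤ deriv a t ^ 2 := fun t ht =>
    mul_deriv_deriv_le_deriv_sq (eventually_of_mem (Ioi_mem_nhds ht) fun u hu =>
      hmono'.monotoneOn.deriv_nonneg_of_isOpen isOpen_Ioi hu) (hreg t ht)
  have hdpos : ∀ t > 0, 0 < deriv a t := fun t ht =>
    deriv_pos_of_antitoneOn_deriv_div hmono' (hsmooth.differentiableOn two_ne_zero) hpos
      (antitoneOn_deriv_div hsmooth hpos hreg') ht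
  have hint : ∀ t ∈ Ioc 0 τ, IntervalIntegrable (fun u => 1 / a u) volume 0 t := fun t ht =>
    (intervalIntegrable_iff_integrableOn_Ioc_of_le ht.1.le).2
      (hpart.mono_set (Ioc_subset_Ioc_right ht.2))
  have hhorizon := tendsto_intervalIntegral_nhdsGT hτ hpart
  have hτ_mem : ∀ᶠ t in 𝓝[>] (0 : ℝ), t ∈ Ioc 0 τ := Ioc_mem_nhdsGT hτ
  have hdiv : Tendsto (fun t => t / a t) (𝓝[>] 0) (𝓝 0) :=
    tendsto_of_tendsto_of_tendsto_of_le_of_le' tendsto_const_nhds hhorizon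
      (eventually_mem_nhdsWithin.mono fun t ht => div_nonneg ht.le (hpos t ht).le)
      (hτ_mem.mono fun t ht => div_le_integral_one_div ht.1
        (hmono'.monotoneOn.mono Ioc_subset_Ioi_self) (fun u hu => hpos u hu.1) (hint t ht))
  refine ⟨hdiv, tendsto_zero_of_eventually_le_of_tendsto
    (eventually_mem_nhdsWithin.mono fun s hs => (one_div_pos.2 (hdpos s hs)).le)
    (by simpa only [add_zero] using hdiv.add hhorizon) (hτ_mem.mono fun t ht => ?_)⟩
  exact eventually_one_div_deriv_le ha0 hsmooth hpos hdpos hreg' ht.1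
    (hcont.mono Icc_subset_Ici_self) (hint t ht)
end

section
/- If a is a regular scale factor with finite particle horizon (∫_0^τ dt/a(t) < ∞), then a experiences noninflationary periods at arbitrarily small times: for any δ > 0 there is a nonempty open interval (c,d) ⊆ (0,δ) on which a''(t) < 0. -/
open Set MeasureTheory

/-- If a regular scale factor has a finite particle horizon, then there are
noninflationary periods at arbitrarily small times. -/
theorem finite_particle_horizon_noninflation (a : ℝ → ℝ)
    (ha0 : a 0 = 0)
    (hmono : StrictMonoOn a (Set.Ici 0))
    (hcont : ContinuousOn a (Set.Ici 0))
    (hsmooth : ContDiffOn ℝ 2 a (Set.Ioi 0))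
    (hreg : ∀ t > (0:ℝ), a t * deriv (deriv a) t / (deriv a t) ^ 2 ≤ 1)
    (τ : ℝ) (hτ : 0 < τ)
    (hpart : MeasureTheory.IntegrableOn (fun t => 1 / a t) (Set.Ioc 0 τ)) :
    ∀ δ > (0:ℝ), ∃ c d : ℝ, 0 < c ∧ c < d ∧ d ≤ δ ∧
      ∀ t ∈ Set.Ioo c d, deriv (deriv a) t < 0 := by
  intro δ hδ
  by_contra hcon
  push_neg at hcon
  -- the second derivative, with its regularity on (0, ∞)
  have hder1 : ContDiffOn ℝ 1 (deriv a) (Set.Ioi 0) := by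
    have := hsmooth.deriv_of_isOpen isOpen_Ioi (m := 1) (by norm_num)
    exact this
  have hder2cont : ContinuousOn (deriv (deriv a)) (Set.Ioi 0) := by
    have := hder1.deriv_of_isOpen isOpen_Ioi (m := 0) (by norm_num)
    exact this.continuousOn
  -- Step 1: a'' ≥ 0 on (0, δ)
  have hnonneg : ∀ t ∈ Set.Ioo (0:ℝ) δ, 0 ≤ deriv (deriv a) t := by
    intro t ht
    by_contra hneg
    push_neg at hneg
    have hct : ContinuousAt (deriv (deriv a)) t :=
      hder2cont.continuousAt (isOpen_Ioi.mem_nhds ht.1)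
    have hev : ∀ᶠ x in nhds t, deriv (deriv a) x < 0 :=
      hct.eventually_lt_const hneg
    rcases Metric.eventually_nhds_iff.1 hev with ⟨ε, hε, hball⟩
    set c := max (t - ε/2) (t/2) with hc
    set d := min (t + ε/2) δ with hd
    have hc0 : 0 < c := lt_of_lt_of_le (by linarith [ht.1]) (le_max_right _ _)
    have hcd : c < d := by
      apply max_lt <;> [skip; skip] <;> apply lt_min <;> linarith [ht.1, ht.2]
    have hdδ : d ≤ δ := min_le_right _ _
    obtain ⟨x, hx, hx0⟩ := hcon c d hc0 hcd hdδ
    have : dist x t < ε := by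
      rw [Real.dist_eq, abs_lt]
      constructor
      · linarith [hx.1, le_max_left (t - ε/2) (t/2)]
      · linarith [hx.2, min_le_left (t + ε/2) δ]
    exact absurd (hball this) (not_lt.2 hx0)
  -- Step 2: a is convex on [0, s] where s = min δ τ
  set s := min δ τ with hs
  have hs0 : 0 < s := lt_min hδ hτ
  have hIoosub : Set.Ioo (0:ℝ) s ⊆ Set.Ioi 0 := fun x hx => hx.1
  have hconv : ConvexOn ℝ (Set.Icc 0 s) a := by
    apply convexOn_of_deriv2_nonneg (convex_Icc 0 s)
      (hcont.mono (Set.Icc_subset_Ici_self))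
    · rw [interior_Icc]
      exact (hsmooth.differentiableOn (by norm_num)).mono hIoosub
    · rw [interior_Icc]
      exact (hder1.differentiableOn (by norm_num)).mono hIoosub
    · rw [interior_Icc]
      intro x hx
      simp only [Function.iterate_succ, Function.iterate_zero, Function.comp,
        Function.id_def]
      exact hnonneg x ⟨hx.1, lt_of_lt_of_le hx.2 (min_le_left _ _)⟩
  -- Step 3: a t ≤ (t/s) * a s for t ∈ (0, s]
  have has : 0 < a s := ha0 ▸ hmono Set.self_mem_Ici (Set.mem_Ici.2 hs0.le) hs0
  have hkey : ∀ t ∈ Set.Ioc (0:ℝ) s, a t ≤ (t / s) * a s := by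
    intro t ht
    have h1 : (0:ℝ) ≤ 1 - t/s := by
      have : t/s ≤ 1 := (div_le_one hs0).2 ht.2
      linarith
    have h2 : (0:ℝ) ≤ t/s := div_nonneg ht.1.le hs0.le
    have := hconv.2 (Set.left_mem_Icc.2 hs0.le) (Set.right_mem_Icc.2 hs0.le)
      h1 h2 (by ring)
    simp only [smul_eq_mul, mul_zero, zero_add, ha0] at this
    rw [div_mul_cancel₀ _ hs0.ne'] at this
    linarith [this]
  -- Step 4: hence 1/t is integrable on (0, s], contradiction
  have hint : MeasureTheory.IntegrableOn (fun t : ℝ => t⁻¹) (Set.Ioc 0 s) := by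
    have hg : MeasureTheory.IntegrableOn (fun t => (a s / s) * (1 / a t)) (Set.Ioc 0 s) :=
      (hpart.mono_set (Set.Ioc_subset_Ioc le_rfl (min_le_right _ _))).const_mul _
    apply hg.mono' (by fun_prop)
    rw [MeasureTheory.ae_restrict_iff' measurableSet_Ioc]
    filter_upwards with x hx
    have hax : 0 < a x := ha0 ▸ hmono Set.self_mem_Ici (Set.mem_Ici.2 hx.1.le) hx.1
    rw [Real.norm_eq_abs, abs_of_nonneg (inv_nonneg.2 hx.1.le)]
    rw [inv_eq_one_div, div_le_iff₀ hx.1]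
    have h := hkey x hx
    calc (1:ℝ) = (a x) * (1 / a x) := by field_simp
    _ ≤ ((x/s) * a s) * (1 / a x) := by
        apply mul_le_mul_of_nonneg_right h (by positivity)
    _ = a s / s * (1 / a x) * x := by ring
  have : IntervalIntegrable (fun t : ℝ => t⁻¹) MeasureTheory.volume 0 s := by
    rw [intervalIntegrable_iff_integrableOn_Ioc_of_le hs0.le]
    exact hint
  rw [intervalIntegrable_inv_iff] at this
  rcases this with h | h
  · exact hs0.ne h
  · exact h Set.left_mem_uIcc
end

section
/- Let a be a strongly regular scale factor. Then for each fixed τ > 0, the limit as t₀ → 0⁺ of ∫_{t₀}^τ (a''(t)/a'(t)²)·[√(a(τ)²−a(t₀)²)/√(a(τ)²−a(t)²) − 1] dt exists and is finite, and equals ∫_0^τ (a''(t)/a'(t)²)·[a(τ)/√(a(τ)²−a(t)²) − 1] dt. -/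
/-!
Write `f = a''/a'²`; the two bounds on `a a''/a'²` say `|a f| ≤ K`. For `0 ≤ x ≤ y < A` one has
`0 ≤ √(A² - x²)/√(A² - y²) - 1 ≤ y/√(A² - y²)`, so the integrands are dominated, uniformly in `t₀`,
by `K/√(a(τ)² - a(t)²)`. The lower bound `-K` makes `a' a^K` nondecreasing, so `a'` is bounded below
near `τ` and `a(τ) - a(t) ≥ m (τ - t)`: the dominating function is `O((τ - t)^(-1/2))`, hence
integrable, and dominated convergence gives the limit.
-/

open Set Filter MeasureTheory Topology
open scoped Interval

theorem abs_mul_sqrt_div_sqrt_sub_one_le {A x y z K : ℝ} (hx : 0 ≤ x) (hxy : x ≤ y)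
    (hyA : y < A) (hz : |y * z| ≤ K) :
    |z * (√(A ^ 2 - x ^ 2) / √(A ^ 2 - y ^ 2) - 1)| ≤ K * (√(A ^ 2 - y ^ 2))⁻¹ := by
  have hy : 0 ≤ y := hx.trans hxy
  set P := √(A ^ 2 - y ^ 2)
  set Q := √(A ^ 2 - x ^ 2)
  have hP : 0 < P := Real.sqrt_pos.2 (by nlinarith)
  have hPQ : P ≤ Q := Real.sqrt_le_sqrt (by nlinarith)
  -- `(P + y)² = A² + 2Py ≥ Q²`
  have hQ : Q ≤ P + y := by
    refine Real.sqrt_le_iff.2 ⟨by positivity, ?_⟩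
    nlinarith [Real.sq_sqrt (show 0 ≤ A ^ 2 - y ^ 2 by nlinarith)]
  calc |z * (Q / P - 1)| = |z| * ((Q - P) / P) := by
        rw [abs_mul, div_sub_one hP.ne', abs_of_nonneg (div_nonneg (sub_nonneg.2 hPQ) hP.le)]
    _ ≤ |z| * (y / P) := by gcongr; linarith
    _ = |y * z| * P⁻¹ := by rw [abs_mul, abs_of_nonneg hy]; ring
    _ ≤ K * P⁻¹ := by gcongr

theorem intervalIntegrable_inv_sqrt_of_mul_sub_le {g : ℝ → ℝ} {m s τ : ℝ} (hsτ : s ≤ τ)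
    (hm : 0 < m) (hg_meas : AEStronglyMeasurable g (volume.restrict (Ioc s τ)))
    (hg : ∀ t ∈ Ioo s τ, m * (τ - t) ≤ g t) :
    IntervalIntegrable (fun t => (√(g t))⁻¹) volume s τ := by
  have hbound : IntervalIntegrable (fun t => m ^ (-(1 / 2) : ℝ) * (τ - t) ^ (-(1 / 2) : ℝ))
      volume s τ := by
    have := (intervalIntegral.intervalIntegrable_rpow' (a := 0) (b := τ - s)
      (r := -(1 / 2)) (by norm_num)).comp_sub_left τ
    simpa using (this.symm.const_mul (m ^ (-(1 / 2) : ℝ)))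
  refine hbound.mono_fun' ?_ ?_
  · rw [uIoc_of_le hsτ]
    exact (Real.continuous_sqrt.comp_aestronglyMeasurable hg_meas).inv₀
  · rw [uIoc_of_le hsτ, EventuallyLE, ← Measure.restrict_congr_set Ioo_ae_eq_Ioc,
      ae_restrict_iff' measurableSet_Ioo]
    refine Eventually.of_forall fun t ht => ?_
    have hτt : 0 < τ - t := sub_pos.2 ht.2
    rw [Real.norm_eq_abs, abs_of_nonneg (by positivity), Real.sqrt_eq_rpow, ← Real.rpow_neg_one,
      ← Real.rpow_mul (by linarith [hg t ht, mul_pos hm hτt]), ← Real.mul_rpow hm.le hτt.le]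
    rw [show (1 / 2 : ℝ) * -1 = -(1 / 2) by norm_num]
    exact Real.rpow_le_rpow_of_nonpos (by positivity) (hg t ht) (by norm_num)

theorem intervalIntegrable_inv_sqrt_sq_sub_sq {a : ℝ → ℝ} {m τ : ℝ} (hτ : 0 < τ) (hm : 0 < m)
    (ha_meas : AEStronglyMeasurable a (volume.restrict (Ioc 0 τ)))
    (ha_nonneg : ∀ t ∈ Ioo 0 τ, 0 ≤ a t) (hgap : ∀ t ∈ Ioo 0 τ, m * (τ - t) ≤ a τ - a t) :
    IntervalIntegrable (fun t => (√(a τ ^ 2 - a t ^ 2))⁻¹) volume 0 τ := by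
  have hmid : τ / 2 ∈ Ioo 0 τ := ⟨half_pos hτ, half_lt_self hτ⟩
  have hA : 0 < a τ := by
    nlinarith [ha_nonneg _ hmid, hgap _ hmid]
  refine intervalIntegrable_inv_sqrt_of_mul_sub_le hτ.le (mul_pos hm hA) (by fun_prop)
    fun t ht => ?_
  nlinarith [hgap t ht, ha_nonneg t ht, mul_pos hm (sub_pos.2 ht.2)]

theorem intervalIntegral_indicator_Ioi {E : Type*} [NormedAddCommGroup E] [NormedSpace ℝ E]
    {f : ℝ → E} {μ : Measure ℝ} {s t₀ τ : ℝ} (hs : s ≤ t₀) (hτ : t₀ ≤ τ) :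
    ∫ t in s..τ, (Ioi t₀).indicator f t ∂μ = ∫ t in t₀..τ, f t ∂μ := by
  rw [intervalIntegral.integral_of_le (hs.trans hτ), intervalIntegral.integral_of_le hτ,
    integral_indicator measurableSet_Ioi, Measure.restrict_restrict measurableSet_Ioi,
    inter_comm, Ioc_inter_Ioi, max_eq_right hs]

theorem tendsto_indicator_mul_sqrt_div_sqrt_sub_one {a f : ℝ → ℝ} {τ t : ℝ} (ht : 0 < t)
    (hA : 0 ≤ a τ) (ha : Tendsto a (𝓝[>] 0) (𝓝 0)) :
    Tendsto (fun t₀ => (Ioi t₀).indicator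
        (fun t => f t * (√(a τ ^ 2 - a t₀ ^ 2) / √(a τ ^ 2 - a t ^ 2) - 1)) t)
      (𝓝[>] 0) (𝓝 (f t * (a τ / √(a τ ^ 2 - a t ^ 2) - 1))) := by
  have hsqrt := ((ha.pow 2).const_sub (a τ ^ 2)).sqrt
  rw [zero_pow two_ne_zero, sub_zero, Real.sqrt_sq hA] at hsqrt
  refine Tendsto.congr' ?_ (tendsto_const_nhds.mul ((hsqrt.div_const _).sub_const 1))
  filter_upwards [Ioo_mem_nhdsGT ht] with t₀ ht₀
  rw [indicator_of_mem (mem_Ioi.2 ht₀.2)]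

theorem hasDerivAt_deriv_of_contDiffOn_two {a : ℝ → ℝ} {s : Set ℝ} (ha : ContDiffOn ℝ 2 a s)
    (hs : IsOpen s) {t : ℝ} (ht : t ∈ s) :
    HasDerivAt a (deriv a t) t ∧ HasDerivAt (deriv a) (deriv (deriv a) t) t :=
  ⟨((ha.differentiableOn (by norm_num)).differentiableAt (hs.mem_nhds ht)).hasDerivAt,
    (((ha.deriv_of_isOpen (m := 1) hs (by norm_num)).differentiableOn one_ne_zero).differentiableAt
      (hs.mem_nhds ht)).hasDerivAt⟩

theorem neg_mul_deriv_sq_le_of_neg_le_div {a : ℝ → ℝ} {K t : ℝ} (hmono : MonotoneOn a (Ioi 0))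
    (ht : 0 < t) (h : -K ≤ a t * deriv (deriv a) t / deriv a t ^ 2) :
    -K * deriv a t ^ 2 ≤ a t * deriv (deriv a) t := by
  rcases eq_or_ne (deriv a t) 0 with h0 | h0
  · -- `t` is a minimum of the nonnegative function `deriv a`
    have hmin : IsLocalMin (deriv a) t := by
      filter_upwards [isOpen_Ioi.mem_nhds ht] with x hx
      rw [h0, ← derivWithin_of_isOpen isOpen_Ioi hx]
      exact hmono.derivWithin_nonneg
    simp [h0, hmin.deriv_eq_zero]
  · exact (le_div_iff₀ (by positivity)).1 h

theorem monotoneOn_deriv_mul_rpow {a : ℝ → ℝ} {K : ℝ} (ha : ContDiffOn ℝ 2 a (Ioi 0))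
    (hpos : ∀ t > 0, 0 < a t) (h : ∀ t > 0, -K * deriv a t ^ 2 ≤ a t * deriv (deriv a) t) :
    MonotoneOn (fun t => deriv a t * a t ^ K) (Ioi 0) := by
  have hderiv : ∀ t > 0, HasDerivAt (fun t => deriv a t * a t ^ K)
      (a t ^ (K - 1) * (a t * deriv (deriv a) t + K * deriv a t ^ 2)) t := by
    intro t ht
    obtain ⟨h1, h2⟩ := hasDerivAt_deriv_of_contDiffOn_two ha isOpen_Ioi ht
    refine (h2.mul (h1.rpow_const (p := K) (Or.inl (hpos t ht).ne'))).congr_deriv ?_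
    rw [Real.rpow_sub_one (hpos t ht).ne']
    field_simp [(hpos t ht).ne']
  refine monotoneOn_of_deriv_nonneg (convex_Ioi 0)
    (fun t ht => (hderiv t ht).continuousAt.continuousWithinAt)
    (fun t ht => (hderiv t (interior_subset ht)).differentiableAt.differentiableWithinAt)
    fun t ht => ?_
  rw [interior_Ioi] at ht
  rw [(hderiv t ht).deriv]
  have := h t ht
  exact mul_nonneg (Real.rpow_pos_of_pos (hpos t ht) (K - 1)).le (by linarith)

theorem exists_pos_mul_sub_le_sub_of_le_deriv {g : ℝ → ℝ} {c m τ : ℝ} (hc : 0 ≤ c) (hcτ : c < τ)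
    (hm : 0 < m) (hmono : StrictMonoOn g (Icc 0 τ)) (hcont : ContinuousOn g (Icc c τ))
    (hdiff : DifferentiableOn ℝ g (Ioo c τ)) (hderiv : ∀ t ∈ Ioo c τ, m ≤ deriv g t) :
    ∃ m' > 0, ∀ t ∈ Icc 0 τ, m' * (τ - t) ≤ g τ - g t := by
  have hτ : 0 < τ := hc.trans_lt hcτ
  have hgc : g c < g τ := hmono ⟨hc, hcτ.le⟩ (right_mem_Icc.2 hτ.le) hcτ
  have hfar : 0 < (g τ - g c) / τ := div_pos (sub_pos.2 hgc) hτ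
  refine ⟨min m ((g τ - g c) / τ), lt_min hm hfar, fun t ht => ?_⟩
  rcases le_total c t with hct | htc
  · have hnear := (convex_Icc c τ).mul_sub_le_image_sub_of_le_deriv hcont
      (by rwa [interior_Icc]) (by rwa [interior_Icc]) t ⟨hct, ht.2⟩ τ
      (right_mem_Icc.2 hcτ.le) ht.2
    nlinarith [min_le_left m ((g τ - g c) / τ), sub_nonneg.2 ht.2]
  · calc min m ((g τ - g c) / τ) * (τ - t) ≤ (g τ - g c) / τ * τ :=
        mul_le_mul (min_le_right _ _) (by linarith [ht.1]) (by linarith [ht.2]) hfar.le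
      _ = g τ - g c := div_mul_cancel₀ _ hτ.ne'
      _ ≤ g τ - g t := by
          gcongr
          exact hmono.monotoneOn ht ⟨hc, hcτ.le⟩ htc

theorem exists_pos_mul_sub_le_sub {a : ℝ → ℝ} {K τ : ℝ} (hτ : 0 < τ) (hK : 0 ≤ K)
    (hmono : StrictMonoOn a (Icc 0 τ)) (hcont : ContinuousOn a (Icc 0 τ))
    (ha : ContDiffOn ℝ 2 a (Ioi 0)) (hpos : ∀ t > 0, 0 < a t)
    (h : ∀ t > 0, -K * deriv a t ^ 2 ≤ a t * deriv (deriv a) t) :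
    ∃ m > 0, ∀ t ∈ Icc 0 τ, m * (τ - t) ≤ a τ - a t := by
  have hdiff : DifferentiableOn ℝ a (Ioi 0) := ha.differentiableOn two_ne_zero
  obtain ⟨c, hc, hc_slope⟩ := exists_deriv_eq_slope a hτ hcont
    (hdiff.mono Ioo_subset_Ioi_self)
  have hc_deriv : 0 < deriv a c := by
    rw [hc_slope]
    exact div_pos (sub_pos.2 (hmono (left_mem_Icc.2 hτ.le) (right_mem_Icc.2 hτ.le) hτ))
      (by linarith)
  -- `deriv a * a ^ K` is nondecreasing, so `deriv a` stays above `deriv a c * (a c / a τ) ^ K`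
  have hlower : ∀ t ∈ Ioo c τ, deriv a c * a c ^ K / a τ ^ K ≤ deriv a t := by
    intro t ht
    have ht0 : 0 < t := hc.1.trans ht.1
    have hmul := monotoneOn_deriv_mul_rpow ha hpos h (mem_Ioi.2 hc.1) (mem_Ioi.2 ht0) ht.1.le
    have hat : a t ^ K ≤ a τ ^ K := Real.rpow_le_rpow (hpos t ht0).le
      (hmono.monotoneOn ⟨ht0.le, ht.2.le⟩ (right_mem_Icc.2 hτ.le) ht.2.le) hK
    have hd_nonneg : 0 ≤ deriv a t := by
      nlinarith [Real.rpow_pos_of_pos (hpos c hc.1) K, Real.rpow_pos_of_pos (hpos t ht0) K]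
    rw [div_le_iff₀ (Real.rpow_pos_of_pos (hpos τ hτ) K)]
    exact hmul.trans (mul_le_mul_of_nonneg_left hat hd_nonneg)
  exact exists_pos_mul_sub_le_sub_of_le_deriv hc.1.le hc.2
    (div_pos (mul_pos hc_deriv (Real.rpow_pos_of_pos (hpos c hc.1) K))
      (Real.rpow_pos_of_pos (hpos τ hτ) K)) hmono (hcont.mono (Icc_subset_Icc_left hc.1.le))
    (hdiff.mono fun t ht => hc.1.trans ht.1) hlower

theorem tendsto_intervalIntegral_mul_sqrt_div_sqrt_sub_one {a f : ℝ → ℝ} {K m τ : ℝ}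
    (hτ : 0 < τ) (ha0 : a 0 = 0) (hmono : MonotoneOn a (Icc 0 τ))
    (hcont : ContinuousOn a (Icc 0 τ)) (hf_meas : Measurable f)
    (hf : ∀ t ∈ Ioo 0 τ, |a t * f t| ≤ K) (hm : 0 < m)
    (hgap : ∀ t ∈ Ioo 0 τ, m * (τ - t) ≤ a τ - a t) :
    Tendsto (fun t₀ => ∫ t in t₀..τ, f t * (√(a τ ^ 2 - a t₀ ^ 2) / √(a τ ^ 2 - a t ^ 2) - 1))
      (𝓝[>] 0) (𝓝 (∫ t in 0..τ, f t * (a τ / √(a τ ^ 2 - a t ^ 2) - 1))) := by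
  set A := a τ
  have ha_nonneg : ∀ t ∈ Icc 0 τ, 0 ≤ a t := fun t ht =>
    ha0 ▸ hmono (left_mem_Icc.2 hτ.le) ht ht.1
  have ha_lt : ∀ t ∈ Ioo 0 τ, a t < A := fun t ht => by
    linarith [hgap t ht, mul_pos hm (sub_pos.2 ht.2)]
  have ha_meas : AEStronglyMeasurable a (volume.restrict (Ioc 0 τ)) :=
    (hcont.mono Ioc_subset_Icc_self).aestronglyMeasurable measurableSet_Ioc
  have hbound_int : IntervalIntegrable (fun t => K * (√(A ^ 2 - a t ^ 2))⁻¹) volume 0 τ :=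
    (intervalIntegrable_inv_sqrt_sq_sub_sq hτ hm ha_meas
      (fun t ht => ha_nonneg t (Ioo_subset_Icc_self ht)) hgap).const_mul K
  have hdct := intervalIntegral.tendsto_integral_filter_of_dominated_convergence
    (F := fun t₀ => (Ioi t₀).indicator
      fun t => f t * (√(A ^ 2 - a t₀ ^ 2) / √(A ^ 2 - a t ^ 2) - 1))
    (f := fun t => f t * (A / √(A ^ 2 - a t ^ 2) - 1)) (l := 𝓝[>] 0) _ ?meas ?bound hbound_int
    ?lim
  · refine hdct.congr' ?_
    filter_upwards [Ioo_mem_nhdsGT hτ] with t₀ ht₀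
    exact intervalIntegral_indicator_Ioi ht₀.1.le ht₀.2.le
  case meas =>
    rw [uIoc_of_le hτ.le]
    have hsqrt : AEStronglyMeasurable (fun t => √(A ^ 2 - a t ^ 2)) (volume.restrict (Ioc 0 τ)) :=
      by fun_prop
    exact Eventually.of_forall fun t₀ => (hf_meas.aestronglyMeasurable.mul
      ((aestronglyMeasurable_const.div₀ hsqrt).sub aestronglyMeasurable_const)).indicator
        measurableSet_Ioi
  case bound =>
    filter_upwards [Ioo_mem_nhdsGT hτ] with t₀ ht₀
    filter_upwards [volume.ae_ne τ] with t htτ ht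
    rw [uIoc_of_le hτ.le] at ht
    have ht' : t ∈ Ioo 0 τ := ⟨ht.1, lt_of_le_of_ne ht.2 htτ⟩
    by_cases htt₀ : t ∈ Ioi t₀
    · rw [indicator_of_mem htt₀, Real.norm_eq_abs]
      exact abs_mul_sqrt_div_sqrt_sub_one_le (ha_nonneg t₀ (Ioo_subset_Icc_self ht₀))
        (hmono (Ioo_subset_Icc_self ht₀) (Ioo_subset_Icc_self ht') (le_of_lt htt₀))
        (ha_lt t ht') (hf t ht')
    · rw [indicator_of_notMem htt₀, norm_zero]
      exact mul_nonneg ((abs_nonneg _).trans (hf t₀ ht₀)) (by positivity)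
  case lim =>
    have ha_tendsto : Tendsto a (𝓝[>] 0) (𝓝 0) := by
      have := (hcont 0 (left_mem_Icc.2 hτ.le)).tendsto
      rw [ha0] at this
      exact this.mono_left (nhdsWithin_le_of_mem (Icc_mem_nhdsGT hτ))
    exact Eventually.of_forall fun t ht => tendsto_indicator_mul_sqrt_div_sqrt_sub_one
      (uIoc_of_le hτ.le ▸ ht).1 (ha_nonneg τ (right_mem_Icc.2 hτ.le)) ha_tendsto

/-- For a strongly regular scale factor, the limit defining `g_ττ` at the big bang
exists and equals the corresponding integral with `t₀ = 0`. -/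
theorem gtautau_limit_exists (a : ℝ → ℝ)
    (ha0 : a 0 = 0)
    (hmono : StrictMonoOn a (Set.Ici 0))
    (hcont : ContinuousOn a (Set.Ici 0))
    (hsmooth : ContDiffOn ℝ 2 a (Set.Ioi 0))
    (hreg : ∀ t > (0:ℝ), a t * deriv (deriv a) t / (deriv a t) ^ 2 ≤ 1)
    (K : ℝ) (hK : 1 ≤ K)
    (hKbound : ∀ t > (0:ℝ), -K ≤ a t * deriv (deriv a) t / (deriv a t) ^ 2) :
    ∀ τ > (0:ℝ),
      Filter.Tendsto
        (fun t₀ => ∫ t in t₀..τ, (deriv (deriv a) t / (deriv a t) ^ 2) *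
          (Real.sqrt ((a τ) ^ 2 - (a t₀) ^ 2) / Real.sqrt ((a τ) ^ 2 - (a t) ^ 2) - 1))
        (nhdsWithin 0 (Set.Ioi 0))
        (nhds (∫ t in (0:ℝ)..τ, (deriv (deriv a) t / (deriv a t) ^ 2) *
          (a τ / Real.sqrt ((a τ) ^ 2 - (a t) ^ 2) - 1))) := by
  intro τ hτ
  have hpos : ∀ t > 0, 0 < a t := fun t ht => ha0 ▸ hmono self_mem_Ici (le_of_lt ht) ht
  have hmono' : StrictMonoOn a (Icc 0 τ) := hmono.mono Icc_subset_Ici_self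
  have hcont' : ContinuousOn a (Icc 0 τ) := hcont.mono Icc_subset_Ici_self
  obtain ⟨m, hm, hgap⟩ := exists_pos_mul_sub_le_sub hτ (zero_le_one.trans hK) hmono' hcont'
    hsmooth hpos fun t ht => neg_mul_deriv_sq_le_of_neg_le_div
      (hmono.monotoneOn.mono Ioi_subset_Ici_self) ht (hKbound t ht)
  refine tendsto_intervalIntegral_mul_sqrt_div_sqrt_sub_one (K := K) hτ ha0 hmono'.monotoneOn hcont'
    ((measurable_deriv _).div ((measurable_deriv a).pow_const 2)) (fun t ht => ?_) hm
    fun t ht => hgap t (Ioo_subset_Icc_self ht)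
  rw [← mul_div_assoc, abs_le]
  exact ⟨hKbound t ht.1, (hreg t ht.1).trans hK⟩
end

section
/- Let a be a regular scale factor with lim_{t→0⁺} a'(t) = 0 and a''(t) ≥ 0 on some interval (0,ε). Then for any τ > 0, lim_{t₀→0⁺} ∫_{t₀}^τ (a''(t)/a'(t)²)·dt/√(a(τ)²−a(t)²) = +∞. -/
/-!
Near `0` we have `a'' ≥ 0`, and `√(a(τ)² - a(t)²) ≤ a(τ)`, so there the integrand dominates
`(a''/a'²) / a(τ) = -(1/a')' / a(τ)`; hence `∫_{t₀}^δ ≥ (1/a'(t₀) - 1/a'(δ)) / a(τ) → ∞`, because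
`a'(t₀) → 0⁺`. The remaining integral over `[δ, τ]` is a finite constant: `a'` has a positive
minimum `m` there, so `a(τ)² - a(t)² ≥ m a(τ) (τ - t)` and the singularity at `τ` is integrable.

Both steps need `a' > 0` on `(0, ∞)`, which is where regularity enters: `a a''/a'² ≤ 1` makes
`1/a'(t) + t/a(u)` nondecreasing just to the right of a last zero `u` of `a'`, so `1/a'` could not
blow up at `u`.
-/

open Set Filter Topology MeasureTheory

theorem exists_last_zero_of_continuousOn {g : ℝ → ℝ} {s w : ℝ} (hg : ContinuousOn g (Icc s w))
    (hsw : s ≤ w) (hs : g s = 0) (hw : g w ≠ 0) :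
    ∃ u ∈ Ico s w, g u = 0 ∧ ∀ t ∈ Ioc u w, g t ≠ 0 := by
  have hK : IsCompact (Icc s w ∩ g ⁻¹' {0}) := isCompact_Icc.of_isClosed_subset
    (hg.preimage_isClosed_of_isClosed isClosed_Icc isClosed_singleton) inter_subset_left
  obtain ⟨u, ⟨hu, hu0⟩, hmax⟩ := hK.exists_isGreatest ⟨s, ⟨le_rfl, hsw⟩, hs⟩
  refine ⟨u, ⟨hu.1, hu.2.lt_of_ne ?_⟩, hu0, fun t ht ht0 => ?_⟩
  · rintro rfl
    exact hw hu0
  · exact ht.1.not_ge (hmax ⟨⟨hu.1.trans ht.1.le, ht.2⟩, ht0⟩)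

theorem intervalIntegrable_div_sqrt_of_sq_lt {q a : ℝ → ℝ} {x y τ : ℝ} (hxy : x ≤ y)
    (hq : ContinuousOn q (Icc x y)) (ha : ContinuousOn a (Icc x y))
    (hlt : ∀ t ∈ Icc x y, a t ^ 2 < a τ ^ 2) :
    IntervalIntegrable (fun t => q t / √(a τ ^ 2 - a t ^ 2)) volume x y :=
  (hq.div (Real.continuous_sqrt.comp_continuousOn (continuousOn_const.sub (ha.pow 2)))
    fun t ht => (Real.sqrt_pos.2 (sub_pos.2 (hlt t ht))).ne').intervalIntegrable_of_Icc hxy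

theorem intervalIntegrable_div_sqrt_of_slope {q a : ℝ → ℝ} {δ τ m : ℝ} (hδτ : δ < τ)
    (hq : ContinuousOn q (Icc δ τ)) (ha : ContinuousOn a (Icc δ τ)) (hm : 0 < m)
    (ha_nonneg : ∀ t ∈ Icc δ τ, 0 ≤ a t) (hslope : ∀ t ∈ Icc δ τ, m * (τ - t) ≤ a τ - a t) :
    IntervalIntegrable (fun t => q t / √(a τ ^ 2 - a t ^ 2)) volume δ τ := by
  obtain ⟨M, hM⟩ := isCompact_Icc.exists_bound_of_continuousOn hq
  have hM0 : 0 ≤ M := (norm_nonneg _).trans (hM δ (left_mem_Icc.2 hδτ.le))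
  have haτ : 0 < a τ := by
    nlinarith [hslope δ (left_mem_Icc.2 hδτ.le), ha_nonneg δ (left_mem_Icc.2 hδτ.le)]
  -- near `τ` the integrand is `O((τ - t)^(-1/2))`
  have hdom : IntervalIntegrable (fun t => M / √(m * a τ) * (τ - t) ^ (-(1 / 2) : ℝ))
      volume δ τ := by
    have h := (intervalIntegral.intervalIntegrable_rpow' (r := -(1 / 2)) (a := 0) (b := τ - δ)
      (by norm_num)).comp_sub_left τ
    simp only [sub_zero, sub_sub_cancel] at h
    exact (h.const_mul _).symm
  refine hdom.mono_fun' ?_ ?_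
  · rw [uIoc_of_le hδτ.le]
    refine (((hq.mono Ioc_subset_Icc_self).aemeasurable measurableSet_Ioc).div ?_)
      |>.aestronglyMeasurable
    exact (Real.continuous_sqrt.comp_continuousOn (continuousOn_const.sub
      ((ha.mono Ioc_subset_Icc_self).pow 2))).aemeasurable measurableSet_Ioc
  rw [EventuallyLE, uIoc_of_le hδτ.le, ae_restrict_iff' measurableSet_Ioc]
  refine ae_of_all _ fun t ht => ?_
  have ht' : t ∈ Icc δ τ := Ioc_subset_Icc_self ht
  rcases ht.2.eq_or_lt with rfl | htτ
  · simp only [sub_self, Real.sqrt_zero, div_zero, norm_zero]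
    positivity
  have hprod : 0 < m * a τ * (τ - t) := by have := sub_pos.2 htτ; positivity
  have hsq : m * a τ * (τ - t) ≤ a τ ^ 2 - a t ^ 2 := by
    have hat := ha_nonneg t ht'
    nlinarith [mul_le_mul_of_nonneg_right (hslope t ht') (by positivity : 0 ≤ a τ + a t),
      mul_nonneg hprod.le hat]
  calc ‖q t / √(a τ ^ 2 - a t ^ 2)‖ = ‖q t‖ / √(a τ ^ 2 - a t ^ 2) := by
        rw [norm_div, Real.norm_of_nonneg (Real.sqrt_nonneg _)]
    _ ≤ M / √(m * a τ * (τ - t)) :=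
        div_le_div₀ hM0 (hM t ht') (Real.sqrt_pos.2 hprod) (Real.sqrt_le_sqrt hsq)
    _ = M / √(m * a τ) * (τ - t) ^ (-(1 / 2) : ℝ) := by
        rw [Real.sqrt_mul (by positivity), Real.rpow_neg (sub_pos.2 htτ).le, ← Real.sqrt_eq_rpow,
          div_mul_eq_div_div, div_eq_mul_inv _ √(τ - t)]

section RegularScaleFactor

variable {a : ℝ → ℝ}

theorem hasDerivAt_of_contDiffOn_Ioi (ha : ContDiffOn ℝ 2 a (Ioi 0)) {t : ℝ} (ht : 0 < t) :
    HasDerivAt a (deriv a t) t :=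
  ((ha.differentiableOn (by norm_num)).differentiableAt (Ioi_mem_nhds ht)).hasDerivAt

theorem hasDerivAt_deriv_of_contDiffOn_Ioi (ha : ContDiffOn ℝ 2 a (Ioi 0)) {t : ℝ} (ht : 0 < t) :
    HasDerivAt (deriv a) (deriv (deriv a) t) t :=
  (((ha.deriv_of_isOpen isOpen_Ioi (by norm_num : (1 : WithTop ℕ∞) + 1 ≤ 2)).differentiableOn
    one_ne_zero).differentiableAt (Ioi_mem_nhds ht)).hasDerivAt

theorem continuousOn_deriv_deriv_div_sq (ha : ContDiffOn ℝ 2 a (Ioi 0)) {s : Set ℝ}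
    (hs : s ⊆ Ioi 0) (hpos : ∀ t ∈ s, 0 < deriv a t) :
    ContinuousOn (fun t => deriv (deriv a) t / deriv a t ^ 2) s := by
  have had : ContDiffOn ℝ 1 (deriv a) (Ioi 0) := ha.deriv_of_isOpen isOpen_Ioi (by norm_num)
  exact ((had.continuousOn_deriv_of_isOpen isOpen_Ioi le_rfl).mono hs).div
    ((had.continuousOn.mono hs).pow 2) fun t ht => (pow_pos (hpos t ht) 2).ne'

theorem monotoneOn_inv_deriv_add_div (ha : ContDiffOn ℝ 2 a (Ioi 0))
    (hreg : ∀ t > (0:ℝ), a t * deriv (deriv a) t / deriv a t ^ 2 ≤ 1)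
    {I : Set ℝ} (hI : Convex ℝ I) (hI0 : I ⊆ Ioi 0) (hpos : ∀ t ∈ I, 0 < deriv a t)
    {c : ℝ} (hc : 0 < c) (hca : ∀ t ∈ I, c ≤ a t) :
    MonotoneOn (fun t => (deriv a t)⁻¹ + t / c) I := by
  have hderiv : ∀ t ∈ I, HasDerivAt (fun t => (deriv a t)⁻¹ + t / c)
      (-(deriv (deriv a) t) / deriv a t ^ 2 + 1 / c) t := fun t ht =>
    ((hasDerivAt_deriv_of_contDiffOn_Ioi ha (hI0 ht)).inv (hpos t ht).ne').add
      ((hasDerivAt_id t).div_const c)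
  refine monotoneOn_of_hasDerivWithinAt_nonneg hI
    (fun t ht => (hderiv t ht).continuousAt.continuousWithinAt)
    (fun t ht => (hderiv t (interior_subset ht)).hasDerivWithinAt) fun t ht => ?_
  replace ht := interior_subset ht
  have hat : 0 < a t := hc.trans_le (hca t ht)
  have h1 : deriv (deriv a) t / deriv a t ^ 2 ≤ 1 / a t := by
    rw [le_div_iff₀ hat, div_mul_eq_mul_div, mul_comm]
    exact hreg t (hI0 ht)
  have h2 : 1 / a t ≤ 1 / c := one_div_le_one_div_of_le hc (hca t ht)
  rw [neg_div]
  linarith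

theorem deriv_pos_of_regular (ha0 : a 0 = 0) (hmono : StrictMonoOn a (Ici 0))
    (ha : ContDiffOn ℝ 2 a (Ioi 0))
    (hreg : ∀ t > (0:ℝ), a t * deriv (deriv a) t / deriv a t ^ 2 ≤ 1) {s : ℝ} (hs : 0 < s) :
    0 < deriv a s := by
  have hcont : ContinuousOn (deriv a) (Ioi 0) := ha.continuousOn_deriv_of_isOpen isOpen_Ioi
    (by norm_num)
  have hnonneg : ∀ t > 0, 0 ≤ deriv a t := fun t ht => by
    rw [← derivWithin_of_isOpen isOpen_Ioi ht]
    exact (hmono.monotoneOn.mono Ioi_subset_Ici_self).derivWithin_nonneg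
  refine (hnonneg s hs).lt_of_ne' fun hs0 => ?_
  have hsub : Icc s (s + 1) ⊆ Ioi 0 := fun t ht => hs.trans_le ht.1
  obtain ⟨w, hw, hw'⟩ := exists_deriv_eq_slope a (lt_add_one s)
    (fun t ht => (hasDerivAt_of_contDiffOn_Ioi ha (hsub ht)).continuousAt.continuousWithinAt)
    fun t ht =>
      (hasDerivAt_of_contDiffOn_Ioi ha (hsub (Ioo_subset_Icc_self ht))).differentiableAt
        |>.differentiableWithinAt
  have hw0 : deriv a w ≠ 0 := by
    rw [hw', add_sub_cancel_left, div_one, sub_ne_zero]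
    exact (hmono hs.le (hs.le.trans (lt_add_one s).le) (lt_add_one s)).ne'
  obtain ⟨u, hu, hu0, hnz⟩ := exists_last_zero_of_continuousOn
    (hcont.mono fun t ht => hs.trans_le ht.1) hw.1.le hs0 hw0
  have hu_pos : 0 < u := hs.trans_le hu.1
  have hpos : ∀ t ∈ Ioc u w, 0 < deriv a t := fun t ht =>
    (hnonneg t (hu_pos.trans ht.1)).lt_of_ne' (hnz t ht)
  have hau : 0 < a u := ha0 ▸ hmono self_mem_Ici hu_pos.le hu_pos
  have hbdd : ∀ t ∈ Ioc u w, (deriv a t)⁻¹ ≤ (deriv a w)⁻¹ + w / a u := fun t ht => by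
    have hmon := monotoneOn_inv_deriv_add_div ha hreg (convex_Ioc u w)
      (fun t ht => hu_pos.trans ht.1) hpos hau
      (fun t ht => (hmono hu_pos.le (hu_pos.trans ht.1).le ht.1).le)
      ht (right_mem_Ioc.2 hu.2) ht.2
    have : 0 ≤ t / a u := div_nonneg (hu_pos.trans ht.1).le hau.le
    simp only at hmon
    linarith
  have htend : Tendsto (fun t => (deriv a t)⁻¹) (𝓝[>] u) atTop := by
    refine (tendsto_nhdsWithin_iff.2 ⟨?_, ?_⟩).inv_tendsto_nhdsGT_zero
    · exact hu0 ▸ (hcont.continuousAt (Ioi_mem_nhds hu_pos)).tendsto.mono_left nhdsWithin_le_nhds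
    · filter_upwards [Ioc_mem_nhdsGT hu.2] with t ht using hpos t ht
  obtain ⟨t, ht, hlt⟩ := (Filter.Eventually.and (Ioc_mem_nhdsGT hu.2)
    (htend.eventually_gt_atTop ((deriv a w)⁻¹ + w / a u))).exists
  exact (hbdd t ht).not_gt hlt

theorem integral_deriv_deriv_div_sq (ha : ContDiffOn ℝ 2 a (Ioi 0)) {x y : ℝ} (hx : 0 < x)
    (hxy : x ≤ y) (hpos : ∀ t ∈ Icc x y, 0 < deriv a t) :
    ∫ t in x..y, deriv (deriv a) t / deriv a t ^ 2 = (deriv a x)⁻¹ - (deriv a y)⁻¹ := by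
  have hsub : Icc x y ⊆ Ioi 0 := fun t ht => hx.trans_le ht.1
  rw [intervalIntegral.integral_eq_sub_of_hasDerivAt (f := fun t => -(deriv a t)⁻¹)
    (fun t ht => ?_) ((continuousOn_deriv_deriv_div_sq ha hsub hpos).intervalIntegrable_of_Icc hxy)]
  · ring
  · rw [uIcc_of_le hxy] at ht
    exact ((hasDerivAt_deriv_of_contDiffOn_Ioi ha (hsub ht)).inv (hpos t ht).ne').neg.congr_deriv
      (by ring)

theorem inv_deriv_sub_inv_div_le_integral (ha : ContDiffOn ℝ 2 a (Ioi 0)) {x y τ : ℝ}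
    (hx : 0 < x) (hxy : x ≤ y) (hpos : ∀ t ∈ Icc x y, 0 < deriv a t)
    (hconv : ∀ t ∈ Icc x y, 0 ≤ deriv (deriv a) t) (haτ : 0 < a τ)
    (hlt : ∀ t ∈ Icc x y, a t ^ 2 < a τ ^ 2) :
    ((deriv a x)⁻¹ - (deriv a y)⁻¹) / a τ ≤
      ∫ t in x..y, deriv (deriv a) t / deriv a t ^ 2 / √(a τ ^ 2 - a t ^ 2) := by
  have hsub : Icc x y ⊆ Ioi 0 := fun t ht => hx.trans_le ht.1
  have hq := continuousOn_deriv_deriv_div_sq ha hsub hpos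
  rw [← integral_deriv_deriv_div_sq ha hx hxy hpos, ← intervalIntegral.integral_div]
  refine intervalIntegral.integral_mono_on hxy ((hq.intervalIntegrable_of_Icc hxy).div_const _)
    (intervalIntegrable_div_sqrt_of_sq_lt hxy hq (ha.continuousOn.mono hsub) hlt) fun t ht => ?_
  have hsqrt : √(a τ ^ 2 - a t ^ 2) ≤ a τ :=
    Real.sqrt_le_iff.2 ⟨haτ.le, by nlinarith [sq_nonneg (a t)]⟩
  exact div_le_div_of_nonneg_left (div_nonneg (hconv t ht) (sq_nonneg _))
    (Real.sqrt_pos.2 (sub_pos.2 (hlt t ht))) hsqrt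

theorem intervalIntegrable_div_sqrt_of_deriv_pos (ha : ContDiffOn ℝ 2 a (Ioi 0))
    (hpos : ∀ t > 0, 0 < deriv a t) (ha_nonneg : ∀ t > 0, 0 ≤ a t) {δ τ : ℝ} (hδ : 0 < δ)
    (hδτ : δ < τ) :
    IntervalIntegrable (fun t => deriv (deriv a) t / deriv a t ^ 2 / √(a τ ^ 2 - a t ^ 2))
      volume δ τ := by
  have hsub : Icc δ τ ⊆ Ioi 0 := fun t ht => hδ.trans_le ht.1
  have hcont : ContinuousOn (deriv a) (Icc δ τ) :=
    (ha.continuousOn_deriv_of_isOpen isOpen_Ioi (by norm_num)).mono hsub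
  obtain ⟨c, hc, hmin⟩ := isCompact_Icc.exists_isMinOn (nonempty_Icc.2 hδτ.le) hcont
  refine intervalIntegrable_div_sqrt_of_slope hδτ
    (continuousOn_deriv_deriv_div_sq ha hsub fun t ht => hpos t (hsub ht))
    (ha.continuousOn.mono hsub) (hpos c (hsub hc)) (fun t ht => ha_nonneg t (hsub ht))
    fun t ht => ?_
  have hdiff : DifferentiableOn ℝ a (interior (Icc δ τ)) := fun x hx =>
    (hasDerivAt_of_contDiffOn_Ioi ha (hsub (interior_subset hx))).differentiableAt
      |>.differentiableWithinAt
  exact (convex_Icc δ τ).mul_sub_le_image_sub_of_le_deriv (ha.continuousOn.mono hsub) hdiff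
    (fun x hx => hmin (interior_subset hx)) t ht τ (right_mem_Icc.2 hδτ.le) ht.2

end RegularScaleFactor

theorem integral_diverges_general (a : ℝ → ℝ)
    (ha0 : a 0 = 0)
    (hmono : StrictMonoOn a (Set.Ici 0))
    (hsmooth : ContDiffOn ℝ 2 a (Set.Ioi 0))
    (hreg : ∀ t > (0:ℝ), a t * deriv (deriv a) t / (deriv a t) ^ 2 ≤ 1)
    (hderiv0 : Filter.Tendsto (deriv a) (nhdsWithin 0 (Set.Ioi 0)) (nhds 0))
    (ε : ℝ) (hε : 0 < ε)
    (hconv : ∀ t ∈ Set.Ioo (0:ℝ) ε, 0 ≤ deriv (deriv a) t) :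
    ∀ τ > (0:ℝ),
      Filter.Tendsto
        (fun t₀ => ∫ t in t₀..τ,
          (deriv (deriv a) t / (deriv a t) ^ 2) / Real.sqrt ((a τ) ^ 2 - (a t) ^ 2))
        (nhdsWithin 0 (Set.Ioi 0)) Filter.atTop := by
  intro τ hτ
  have hapos : ∀ t > 0, 0 < a t := fun t ht => ha0 ▸ hmono self_mem_Ici (mem_Ici.2 ht.le) ht
  have hpos : ∀ t > 0, 0 < deriv a t := fun t ht => deriv_pos_of_regular ha0 hmono hsmooth hreg ht
  obtain ⟨δ, hδ, hδε, hδτ⟩ : ∃ δ, 0 < δ ∧ δ < ε ∧ δ < τ :=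
    ⟨min ε τ / 2, by positivity, by linarith [min_le_left ε τ], by linarith [min_le_right ε τ]⟩
  have hlower : ∀ x ∈ Ioo 0 δ, ((deriv a x)⁻¹ - (deriv a δ)⁻¹) / a τ +
      ∫ t in δ..τ, deriv (deriv a) t / deriv a t ^ 2 / √(a τ ^ 2 - a t ^ 2) ≤
      ∫ t in x..τ, deriv (deriv a) t / deriv a t ^ 2 / √(a τ ^ 2 - a t ^ 2) := fun x hx => by
    have hx0 : ∀ t ∈ Icc x δ, 0 < t := fun t ht => hx.1.trans_le ht.1
    have hsq : ∀ t ∈ Icc x δ, a t ^ 2 < a τ ^ 2 := fun t ht => pow_lt_pow_left₀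
      (hmono (hx0 t ht).le hτ.le (ht.2.trans_lt hδτ)) (hapos t (hx0 t ht)).le two_ne_zero
    rw [← intervalIntegral.integral_add_adjacent_intervals (intervalIntegrable_div_sqrt_of_sq_lt
      hx.2.le (continuousOn_deriv_deriv_div_sq hsmooth hx0 fun t ht => hpos t (hx0 t ht))
      (hsmooth.continuousOn.mono hx0) hsq)
      (intervalIntegrable_div_sqrt_of_deriv_pos hsmooth hpos (fun t ht => (hapos t ht).le) hδ hδτ)]
    exact add_le_add_left (inv_deriv_sub_inv_div_le_integral hsmooth hx.1 hx.2.le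
      (fun t ht => hpos t (hx0 t ht)) (fun t ht => hconv t ⟨hx0 t ht, ht.2.trans_lt hδε⟩)
      (hapos τ hτ) hsq) _
  have hinv : Tendsto (fun x => (deriv a x)⁻¹) (𝓝[>] 0) atTop :=
    (tendsto_nhdsWithin_iff.2 ⟨hderiv0, eventually_mem_nhdsWithin.mono hpos⟩)
      |>.inv_tendsto_nhdsGT_zero
  exact tendsto_atTop_mono' _ (eventually_of_mem (Ioo_mem_nhdsGT hδ) hlower)
    (tendsto_atTop_add_const_right _ _
      ((tendsto_atTop_add_const_right _ _ hinv).atTop_div_const (hapos τ hτ)))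

/-- If `a'(0⁺) = 0` and `a'' ≥ 0` near `0`, the integral
`∫_{t₀}^τ (a''/a'²)/√(a(τ)²−a(t)²) dt` diverges to `+∞` as `t₀ → 0⁺`. -/
theorem integral_diverges (a : ℝ → ℝ)
    (ha0 : a 0 = 0)
    (hmono : StrictMonoOn a (Set.Ici 0))
    (hcont : ContinuousOn a (Set.Ici 0))
    (hsmooth : ContDiffOn ℝ 2 a (Set.Ioi 0))
    (hreg : ∀ t > (0:ℝ), a t * deriv (deriv a) t / (deriv a t) ^ 2 ≤ 1)
    (hderiv0 : Filter.Tendsto (deriv a) (nhdsWithin 0 (Set.Ioi 0)) (nhds 0))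
    (ε : ℝ) (hε : 0 < ε)
    (hconv : ∀ t ∈ Set.Ioo (0:ℝ) ε, 0 ≤ deriv (deriv a) t) :
    ∀ τ > (0:ℝ),
      Filter.Tendsto
        (fun t₀ => ∫ t in t₀..τ,
          (deriv (deriv a) t / (deriv a t) ^ 2) / Real.sqrt ((a τ) ^ 2 - (a t) ^ 2))
        (nhdsWithin 0 (Set.Ioi 0)) Filter.atTop :=
  integral_diverges_general a ha0 hmono hsmooth hreg hderiv0 ε hε hconv
end

section
/- Let a be regular and an even extension with either 0 < a'(0⁺) < ∞, or a'(0)=0 but some n-th derivative a⁽ⁿ⁾(0) ≠ 0. Then with χ_{t₀}(τ) = ∫_{t₀}^τ (1/a(t))·a(τ)/√(a(τ)²−a(t)²) dt, one has lim_{t₀→0⁺} a(t₀)·χ_{t₀}(τ) = 0 for every τ > 0. (Hence the angular metric coefficient g_θθ = a(t₀)²·χ_{t₀}(τ)² vanishes at the big bang in the k=0 case.) -/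
/-!
Regularity says `a a'' ≤ a'²`, i.e. `a'/a` is antitone. Hence `a' > 0`, `a/a'` is monotone, and
`a/a' → 0` at `0⁺` (otherwise `log a` would have bounded slope and stay bounded below). Writing
`1/a = (a/a') · (-1/a)'` gives `a(t₀) ∫_{t₀}^δ 1/a ≤ a(δ)/a'(δ)`, which is small for small `δ`.
Away from `τ` the integrand of `χ` is `O(1/a)`, and near `τ` it is `O((τ - t)^(-1/2))` because
`a' > 0`, so that part of `χ` is finite and independent of `t₀`.
-/

open Set Filter MeasureTheory Topology

theorem antitoneOn_deriv_div_of_mul_deriv_deriv_le_sq {f : ℝ → ℝ} {s : Set ℝ} (hs : IsOpen s)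
    (hs' : Convex ℝ s) (hf : ContDiffOn ℝ 2 f s) (hpos : ∀ x ∈ s, 0 < f x)
    (h : ∀ x ∈ s, f x * deriv (deriv f) x ≤ deriv f x ^ 2) :
    AntitoneOn (fun x => deriv f x / f x) s := by
  have hf' : ContDiffOn ℝ 1 (deriv f) s := hf.deriv_of_isOpen hs (by norm_num)
  have hderiv : ∀ x ∈ s, HasDerivAt (fun x => deriv f x / f x)
      ((deriv (deriv f) x * f x - deriv f x * deriv f x) / f x ^ 2) x := fun x hx =>
    ((hf'.differentiableOn one_ne_zero x hx).differentiableAt (hs.mem_nhds hx)).hasDerivAt.div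
      ((hf.differentiableOn (by norm_num) x hx).differentiableAt (hs.mem_nhds hx)).hasDerivAt
      (hpos x hx).ne'
  refine antitoneOn_of_deriv_nonpos hs' (fun x hx => (hderiv x hx).continuousAt.continuousWithinAt)
    ?_ ?_ <;> rw [hs.interior_eq]
  · exact fun x hx => (hderiv x hx).differentiableAt.differentiableWithinAt
  · intro x hx
    rw [(hderiv x hx).deriv]
    exact div_nonpos_of_nonpos_of_nonneg (by nlinarith [h x hx]) (sq_nonneg _)

/-- The integrand of `χ_{t₀}(τ)`. -/
noncomputable def angularIntegrand (a : ℝ → ℝ) (τ t : ℝ) : ℝ :=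
  1 / a t * (a τ / √(a τ ^ 2 - a t ^ 2))

theorem angularIntegrand_nonneg {a : ℝ → ℝ} {τ t : ℝ} (hτ : 0 ≤ a τ) (ht : 0 ≤ a t) :
    0 ≤ angularIntegrand a τ t := by
  unfold angularIntegrand
  positivity

theorem angularIntegrand_le {a : ℝ → ℝ} {σ τ t : ℝ} (ht : 0 < a t) (htσ : a t ≤ a σ)
    (hστ : a σ < a τ) :
    angularIntegrand a τ t ≤ a τ / √(a τ ^ 2 - a σ ^ 2) * (a t)⁻¹ := by
  have hσ : 0 < a τ ^ 2 - a σ ^ 2 := by nlinarith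
  rw [angularIntegrand, one_div, mul_comm]
  gcongr
  linarith

theorem angularIntegrand_le_rpow {a : ℝ → ℝ} {m σ τ t : ℝ} (hσ : 0 < a σ) (hσt : a σ ≤ a t)
    (hm : 0 < m) (htτ : t < τ) (hgap : m * (τ - t) ≤ a τ - a t) :
    angularIntegrand a τ t ≤ a τ / (a σ * √(m * a τ)) * (τ - t) ^ (-(1 / 2) : ℝ) := by
  have hτt : 0 < τ - t := sub_pos.2 htτ
  have ht : 0 < a t := hσ.trans_le hσt
  have hτ : 0 < a τ := by nlinarith
  have hsq : √(m * a τ) * √(τ - t) ≤ √(a τ ^ 2 - a t ^ 2) := by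
    rw [← Real.sqrt_mul (by positivity)]
    refine Real.sqrt_le_sqrt ?_
    nlinarith [mul_le_mul_of_nonneg_right hgap (by linarith : 0 ≤ a τ + a t),
      mul_nonneg (mul_nonneg hm.le hτt.le) ht.le]
  rw [Real.rpow_neg hτt.le, ← Real.sqrt_eq_rpow, angularIntegrand]
  calc 1 / a t * (a τ / √(a τ ^ 2 - a t ^ 2))
      ≤ 1 / a σ * (a τ / (√(m * a τ) * √(τ - t))) := by gcongr
    _ = a τ / (a σ * √(m * a τ)) * (√(τ - t))⁻¹ := by field_simp

/-- The condition `regular` is vacuous where `a' = 0`, since division by zero gives `0`. -/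
structure IsRegularScaleFactor (a : ℝ → ℝ) : Prop where
  map_zero : a 0 = 0
  strictMonoOn : StrictMonoOn a (Ici 0)
  continuousOn : ContinuousOn a (Ici 0)
  contDiffOn : ContDiffOn ℝ 2 a (Ioi 0)
  regular : ∀ t > (0 : ℝ), a t * deriv (deriv a) t / deriv a t ^ 2 ≤ 1

namespace IsRegularScaleFactor

variable {a : ℝ → ℝ}

theorem pos (ha : IsRegularScaleFactor a) {t : ℝ} (ht : 0 < t) : 0 < a t := by
  simpa [ha.map_zero] using ha.strictMonoOn self_mem_Ici ht.le ht

theorem tendsto_nhdsGT_zero (ha : IsRegularScaleFactor a) :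
    Tendsto a (𝓝[>] 0) (𝓝[>] 0) := by
  refine tendsto_nhdsWithin_iff.2 ⟨?_, eventually_nhdsWithin_of_forall fun t ht => ha.pos ht⟩
  simpa [ha.map_zero] using
    ((ha.continuousOn 0 self_mem_Ici).mono Ioi_subset_Ici_self).tendsto

theorem hasDerivAt (ha : IsRegularScaleFactor a) {t : ℝ} (ht : 0 < t) :
    HasDerivAt a (deriv a t) t :=
  ((ha.contDiffOn.differentiableOn (by norm_num) t ht).differentiableAt
    (isOpen_Ioi.mem_nhds ht)).hasDerivAt

theorem continuousOn_Ioi (ha : IsRegularScaleFactor a) : ContinuousOn a (Ioi 0) :=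
  ha.contDiffOn.continuousOn

theorem continuousOn_deriv (ha : IsRegularScaleFactor a) : ContinuousOn (deriv a) (Ioi 0) :=
  ha.contDiffOn.continuousOn_deriv_of_isOpen isOpen_Ioi (by norm_num)

theorem deriv_nonneg (ha : IsRegularScaleFactor a) {t : ℝ} (ht : 0 < t) : 0 ≤ deriv a t := by
  rw [← derivWithin_of_isOpen isOpen_Ioi ht]
  exact (ha.strictMonoOn.monotoneOn.mono Ioi_subset_Ici_self).derivWithin_nonneg

/-- At a zero of `a' ≥ 0` the derivative `a'` has a local minimum, so `a'' = 0` there. -/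
theorem mul_deriv_deriv_le_sq (ha : IsRegularScaleFactor a) {t : ℝ} (ht : 0 < t) :
    a t * deriv (deriv a) t ≤ deriv a t ^ 2 := by
  rcases (ha.deriv_nonneg ht).eq_or_lt with h | h
  · have hmin : IsLocalMin (deriv a) t := by
      filter_upwards [isOpen_Ioi.mem_nhds ht] with s hs
      exact h ▸ ha.deriv_nonneg hs
    simp [hmin.deriv_eq_zero, ← h]
  · simpa [div_le_one (pow_pos h 2)] using ha.regular t ht

theorem antitoneOn_deriv_div (ha : IsRegularScaleFactor a) :
    AntitoneOn (fun t => deriv a t / a t) (Ioi 0) :=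
  antitoneOn_deriv_div_of_mul_deriv_deriv_le_sq isOpen_Ioi (convex_Ioi 0) ha.contDiffOn
    (fun _ => ha.pos) (fun _ => ha.mul_deriv_deriv_le_sq)

/-- Once `a'` vanishes, the antitone ratio `a'/a` forces `a' = 0` to the right, so `a`
would be constant there. -/
theorem deriv_pos (ha : IsRegularScaleFactor a) {t : ℝ} (ht : 0 < t) : 0 < deriv a t := by
  refine (ha.deriv_nonneg ht).lt_of_ne fun h => ?_
  have hnonpos : ∀ s ∈ interior (Ici t), deriv a s ≤ 0 := fun s hs => by
    rw [interior_Ici] at hs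
    have hs0 : 0 < s := ht.trans hs
    have : deriv a s / a s ≤ deriv a t / a t := ha.antitoneOn_deriv_div ht hs0 hs.le
    rwa [← h, zero_div, div_le_iff₀ (ha.pos hs0), zero_mul] at this
  have hconst := (convex_Ici t).image_sub_le_mul_sub_of_deriv_le
    (ha.continuousOn.mono (Ici_subset_Ici.2 ht.le))
    (fun s hs => (ha.hasDerivAt (ht.trans_le (interior_subset hs : t ≤ s))).differentiableAt
      |>.differentiableWithinAt) hnonpos t self_mem_Ici (t + 1) (by simp) (by linarith)
  have := ha.strictMonoOn (mem_Ici.2 ht.le) (mem_Ici.2 (by linarith : (0:ℝ) ≤ t + 1))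
    (by linarith : t < t + 1)
  linarith

theorem monotoneOn_div_deriv (ha : IsRegularScaleFactor a) :
    MonotoneOn (fun t => a t / deriv a t) (Ioi 0) := fun s hs t ht hst => by
  simpa only [inv_div] using
    inv_anti₀ (div_pos (ha.deriv_pos ht) (ha.pos ht)) (ha.antitoneOn_deriv_div hs ht hst)

theorem tendsto_div_deriv_nhdsGT_zero (ha : IsRegularScaleFactor a) :
    Tendsto (fun t => a t / deriv a t) (𝓝[>] 0) (𝓝 0) := by
  have hsmall : ∀ ε > 0, ∃ δ > 0, a δ / deriv a δ < ε := by
    intro ε hε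
    by_contra! h
    have hlog : ∀ t ∈ Ioc (0 : ℝ) 1, Real.log (a 1) - 1 / ε ≤ Real.log (a t) := by
      have hderiv : ∀ t ∈ Ioi (0 : ℝ), HasDerivAt (fun t => Real.log (a t))
          (deriv a t / a t) t := fun t ht => (ha.hasDerivAt ht).log (ha.pos ht).ne'
      intro t ht
      have := (convex_Ioi 0).image_sub_le_mul_sub_of_deriv_le (C := 1 / ε)
        (fun t ht => (hderiv t ht).continuousAt.continuousWithinAt)
        (fun t ht => (hderiv t (interior_subset ht)).differentiableAt.differentiableWithinAt)
        (fun t ht => by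
          rw [interior_Ioi] at ht
          rw [(hderiv t ht).deriv, div_le_div_iff₀ (ha.pos ht) hε, one_mul,
            ← le_div_iff₀' (ha.deriv_pos ht)]
          exact h t ht) t ht.1 1 (mem_Ioi.2 one_pos) ht.2
      nlinarith [ht.1, one_div_pos.2 hε]
    have hbot : Tendsto (fun t => Real.log (a t)) (𝓝[>] 0) atBot :=
      Real.tendsto_log_nhdsGT_zero.comp ha.tendsto_nhdsGT_zero
    obtain ⟨t, hlt, ht⟩ := ((hbot.eventually_lt_atBot (Real.log (a 1) - 1 / ε)).and
      (Ioc_mem_nhdsGT one_pos)).exists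
    exact (hlog t ht).not_gt hlt
  refine tendsto_order.2 ⟨fun l hl => eventually_nhdsWithin_of_forall fun t ht =>
    hl.trans (div_pos (ha.pos ht) (ha.deriv_pos ht)), fun ε hε => ?_⟩
  obtain ⟨δ, hδ, hlt⟩ := hsmall ε hε
  filter_upwards [Ioc_mem_nhdsGT hδ] with t ht
  exact (ha.monotoneOn_div_deriv ht.1 hδ ht.2).trans_lt hlt

theorem intervalIntegrable_inv (ha : IsRegularScaleFactor a) {s t : ℝ} (hs : 0 < s)
    (ht : 0 < t) : IntervalIntegrable (fun x => (a x)⁻¹) volume s t :=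
  ((ha.continuousOn_Ioi.inv₀ fun _ hx => (ha.pos hx).ne').mono
    (ordConnected_Ioi.uIcc_subset (mem_Ioi.2 hs) (mem_Ioi.2 ht))).intervalIntegrable

theorem intervalIntegrable_deriv_div_sq (ha : IsRegularScaleFactor a) {s t : ℝ} (hs : 0 < s)
    (ht : 0 < t) : IntervalIntegrable (fun x => deriv a x / a x ^ 2) volume s t :=
  ((ha.continuousOn_deriv.div (ha.continuousOn_Ioi.pow 2) fun _ hx => (pow_pos (ha.pos hx) 2).ne')
    |>.mono (ordConnected_Ioi.uIcc_subset (mem_Ioi.2 hs) (mem_Ioi.2 ht))).intervalIntegrable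

theorem integral_deriv_div_sq (ha : IsRegularScaleFactor a) {s t : ℝ} (hs : 0 < s)
    (ht : 0 < t) : ∫ x in s..t, deriv a x / a x ^ 2 = (a s)⁻¹ - (a t)⁻¹ := by
  have hsub := ordConnected_Ioi.uIcc_subset (mem_Ioi.2 hs) (mem_Ioi.2 ht)
  have hderiv : ∀ x ∈ uIcc s t, HasDerivAt (fun x => -(a x)⁻¹) (deriv a x / a x ^ 2) x :=
    fun x hx => by
      simpa [neg_div] using ((ha.hasDerivAt (hsub hx)).inv (ha.pos (hsub hx)).ne').fun_neg
  rw [intervalIntegral.integral_eq_sub_of_hasDerivAt hderiv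
    (ha.intervalIntegrable_deriv_div_sq hs ht)]
  ring

theorem mul_integral_inv_le_div_deriv (ha : IsRegularScaleFactor a) {t₀ δ : ℝ} (ht₀ : 0 < t₀)
    (h : t₀ ≤ δ) : a t₀ * ∫ t in t₀..δ, (a t)⁻¹ ≤ a δ / deriv a δ := by
  have hδ : 0 < δ := ht₀.trans_le h
  set r := a δ / deriv a δ
  have hle : ∫ t in t₀..δ, (a t)⁻¹ ≤ r * ((a t₀)⁻¹ - (a δ)⁻¹) := by
    rw [← ha.integral_deriv_div_sq ht₀ hδ, ← intervalIntegral.integral_const_mul]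
    refine intervalIntegral.integral_mono_on h (ha.intervalIntegrable_inv ht₀ hδ)
      ((ha.intervalIntegrable_deriv_div_sq ht₀ hδ).const_mul r) fun t ht => ?_
    have ht' : 0 < t := ht₀.trans_le ht.1
    calc (a t)⁻¹ = a t / deriv a t * (deriv a t / a t ^ 2) := by
          field_simp [(ha.pos ht').ne', (ha.deriv_pos ht').ne']
      _ ≤ r * (deriv a t / a t ^ 2) :=
          mul_le_mul_of_nonneg_right (ha.monotoneOn_div_deriv ht' hδ ht.2)
            (div_nonneg (ha.deriv_nonneg ht') (sq_nonneg _))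
  have hr : 0 ≤ r := (div_pos (ha.pos hδ) (ha.deriv_pos hδ)).le
  calc a t₀ * ∫ t in t₀..δ, (a t)⁻¹ ≤ a t₀ * (r * ((a t₀)⁻¹ - (a δ)⁻¹)) := by
        gcongr
        exact (ha.pos ht₀).le
    _ = r * (1 - a t₀ / a δ) := by field_simp [(ha.pos ht₀).ne']
    _ ≤ r := mul_le_of_le_one_right hr (by linarith [div_pos (ha.pos ht₀) (ha.pos hδ)])

theorem tendsto_mul_integral_inv (ha : IsRegularScaleFactor a) {σ : ℝ} (hσ : 0 < σ) :
    Tendsto (fun t₀ => a t₀ * ∫ t in t₀..σ, (a t)⁻¹) (𝓝[>] 0) (𝓝 0) := by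
  refine tendsto_order.2 ⟨fun l hl => ?_, fun ε hε => ?_⟩
  · filter_upwards [Ioo_mem_nhdsGT hσ] with t₀ ht₀
    refine hl.trans_le (mul_nonneg (ha.pos ht₀.1).le
      (intervalIntegral.integral_nonneg ht₀.2.le fun t ht => ?_))
    exact (inv_pos.2 (ha.pos (ht₀.1.trans_le ht.1))).le
  obtain ⟨δ, hδε, hδ⟩ := ((ha.tendsto_div_deriv_nhdsGT_zero.eventually
    (gt_mem_nhds (half_pos hε))).and (Ioo_mem_nhdsGT hσ)).exists
  have htail : Tendsto (fun t₀ => a t₀ * ∫ t in δ..σ, (a t)⁻¹) (𝓝[>] 0) (𝓝 0) := by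
    simpa using (ha.tendsto_nhdsGT_zero.mono_right nhdsWithin_le_nhds).mul_const
      (∫ t in δ..σ, (a t)⁻¹)
  filter_upwards [Ioo_mem_nhdsGT hδ.1, htail.eventually (gt_mem_nhds (half_pos hε))]
    with t₀ ht₀ hsmall
  rw [← intervalIntegral.integral_add_adjacent_intervals (ha.intervalIntegrable_inv ht₀.1 hδ.1)
    (ha.intervalIntegrable_inv hδ.1 hσ), mul_add]
  linarith [ha.mul_integral_inv_le_div_deriv ht₀.1 ht₀.2.le]

theorem continuousOn_angularIntegrand (ha : IsRegularScaleFactor a) {τ : ℝ} :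
    ContinuousOn (angularIntegrand a τ) (Ioo 0 τ) := by
  have hcont : ContinuousOn a (Ioo 0 τ) := ha.continuousOn_Ioi.mono Ioo_subset_Ioi_self
  refine (continuousOn_const.div hcont fun t ht => (ha.pos ht.1).ne').mul
    (continuousOn_const.div (continuousOn_const.sub (hcont.pow 2)).sqrt fun t ht => ?_)
  have := ha.strictMonoOn (mem_Ici.2 ht.1.le) (mem_Ici.2 (ht.1.trans ht.2).le) ht.2
  exact (Real.sqrt_pos.2 (by nlinarith [ha.pos ht.1])).ne'

theorem intervalIntegrable_angularIntegrand_of_mem_Ioo (ha : IsRegularScaleFactor a)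
    {s σ τ : ℝ} (hs : s ∈ Ioo 0 τ) (hσ : σ ∈ Ioo 0 τ) :
    IntervalIntegrable (angularIntegrand a τ) volume s σ :=
  (ha.continuousOn_angularIntegrand.mono (ordConnected_Ioo.uIcc_subset hs hσ)).intervalIntegrable

theorem intervalIntegrable_angularIntegrand (ha : IsRegularScaleFactor a) {σ τ : ℝ}
    (hσ : 0 < σ) (hστ : σ < τ) : IntervalIntegrable (angularIntegrand a τ) volume σ τ := by
  have hsub : Icc σ τ ⊆ Ioi 0 := fun t ht => hσ.trans_le ht.1
  obtain ⟨ξ, hξ, hmin⟩ := isCompact_Icc.exists_isMinOn (nonempty_Icc.2 hστ.le)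
    (ha.continuousOn_deriv.mono hsub)
  set m := deriv a ξ
  have hm : 0 < m := ha.deriv_pos (hsub hξ)
  have hgap : ∀ t ∈ Icc σ τ, m * (τ - t) ≤ a τ - a t := fun t ht =>
    (convex_Icc σ τ).mul_sub_le_image_sub_of_le_deriv (ha.continuousOn_Ioi.mono hsub)
      (fun x hx => (ha.hasDerivAt (hsub (interior_subset hx))).differentiableAt
        |>.differentiableWithinAt)
      (fun x hx => hmin (interior_subset hx)) t ht τ (right_mem_Icc.2 hστ.le) ht.2
  set K := a τ / (a σ * √(m * a τ))
  have hbound : ∀ t ∈ Ioo σ τ, ‖angularIntegrand a τ t‖ ≤ K * (τ - t) ^ (-(1 / 2) : ℝ) :=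
    fun t ht => by
      have hσt := ha.strictMonoOn.monotoneOn (mem_Ici.2 hσ.le) (mem_Ici.2 (hσ.trans ht.1).le)
        ht.1.le
      rw [Real.norm_of_nonneg (angularIntegrand_nonneg (ha.pos (hσ.trans hστ)).le
        ((ha.pos hσ).trans_le hσt).le)]
      exact angularIntegrand_le_rpow (ha.pos hσ) hσt hm ht.2 (hgap t (Ioo_subset_Icc_self ht))
  have hdom : IntervalIntegrable (fun t => K * (τ - t) ^ (-(1 / 2) : ℝ)) volume σ τ := by
    have := (intervalIntegral.intervalIntegrable_rpow' (r := -(1 / 2)) (by norm_num))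
      |>.comp_sub_left τ (a := τ - σ) (b := τ - τ)
    simpa using this.const_mul K
  rw [intervalIntegrable_iff_integrableOn_Ioo_of_le hστ.le] at hdom ⊢
  exact hdom.mono' ((ha.continuousOn_angularIntegrand.mono (Ioo_subset_Ioo_left hσ.le))
    |>.aestronglyMeasurable measurableSet_Ioo) (ae_restrict_of_forall_mem measurableSet_Ioo hbound)

theorem tendsto_mul_integral_angularIntegrand (ha : IsRegularScaleFactor a) {σ τ : ℝ}
    (hσ : 0 < σ) (hστ : σ < τ) :
    Tendsto (fun t₀ => a t₀ * ∫ t in t₀..σ, angularIntegrand a τ t) (𝓝[>] 0) (𝓝 0) := by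
  set C := a τ / √(a τ ^ 2 - a σ ^ 2)
  have hlt : a σ < a τ := ha.strictMonoOn (mem_Ici.2 hσ.le) (mem_Ici.2 (hσ.trans hστ).le) hστ
  refine squeeze_zero' ?_ ?_ (by simpa using (ha.tendsto_mul_integral_inv hσ).const_mul C)
  all_goals filter_upwards [Ioo_mem_nhdsGT hσ] with t₀ ht₀
  · exact mul_nonneg (ha.pos ht₀.1).le (intervalIntegral.integral_nonneg ht₀.2.le fun t ht =>
      angularIntegrand_nonneg (ha.pos (hσ.trans hστ)).le (ha.pos (ht₀.1.trans_le ht.1)).le)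
  have hle : ∫ t in t₀..σ, angularIntegrand a τ t ≤ ∫ t in t₀..σ, C * (a t)⁻¹ :=
    intervalIntegral.integral_mono_on ht₀.2.le
      (ha.intervalIntegrable_angularIntegrand_of_mem_Ioo ⟨ht₀.1, ht₀.2.trans hστ⟩ ⟨hσ, hστ⟩)
      ((ha.intervalIntegrable_inv ht₀.1 hσ).const_mul C) fun t ht =>
        angularIntegrand_le (ha.pos (ht₀.1.trans_le ht.1))
          (ha.strictMonoOn.monotoneOn (mem_Ici.2 (ht₀.1.trans_le ht.1).le) (mem_Ici.2 hσ.le)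
            ht.2) hlt
  calc a t₀ * ∫ t in t₀..σ, angularIntegrand a τ t
      ≤ a t₀ * ∫ t in t₀..σ, C * (a t)⁻¹ := mul_le_mul_of_nonneg_left hle (ha.pos ht₀.1).le
    _ = C * (a t₀ * ∫ t in t₀..σ, (a t)⁻¹) := by
        rw [intervalIntegral.integral_const_mul]
        ring

end IsRegularScaleFactor

theorem angular_coefficient_vanishes_general (a : ℝ → ℝ)
    (ha0 : a 0 = 0)
    (hmono : StrictMonoOn a (Set.Ici 0))
    (hcont : ContinuousOn a (Set.Ici 0))
    (hsmooth : ContDiffOn ℝ 2 a (Set.Ioi 0))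
    (hreg : ∀ t > (0:ℝ), a t * deriv (deriv a) t / (deriv a t) ^ 2 ≤ 1) :
    ∀ τ > (0:ℝ),
      Filter.Tendsto
        (fun t₀ => a t₀ * ∫ t in t₀..τ,
          (1 / a t) * (a τ / Real.sqrt ((a τ) ^ 2 - (a t) ^ 2)))
        (nhdsWithin 0 (Set.Ioi 0)) (nhds 0) := by
  intro τ hτ
  have ha : IsRegularScaleFactor a := ⟨ha0, hmono, hcont, hsmooth, hreg⟩
  obtain ⟨σ, hσ, hστ⟩ : ∃ σ, 0 < σ ∧ σ < τ := ⟨τ / 2, by positivity, by linarith⟩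
  have htail : Tendsto (fun t₀ => a t₀ * ∫ t in σ..τ, angularIntegrand a τ t) (𝓝[>] 0) (𝓝 0) := by
    simpa using (ha.tendsto_nhdsGT_zero.mono_right nhdsWithin_le_nhds).mul_const
      (∫ t in σ..τ, angularIntegrand a τ t)
  have hsum := (ha.tendsto_mul_integral_angularIntegrand hσ hστ).add htail
  rw [add_zero] at hsum
  refine hsum.congr' ?_
  filter_upwards [Ioo_mem_nhdsGT hσ] with t₀ ht₀
  rw [← mul_add, intervalIntegral.integral_add_adjacent_intervals
    (ha.intervalIntegrable_angularIntegrand_of_mem_Ioo ⟨ht₀.1, ht₀.2.trans hστ⟩ ⟨hσ, hστ⟩)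
    (ha.intervalIntegrable_angularIntegrand hσ hστ)]
  rfl

/-- Under the hypotheses of Corollary `anglelimit`, `a(t₀)·χ_{t₀}(τ) → 0` as `t₀ → 0⁺`,
so the angular metric coefficients vanish at the big bang when `k = 0`. -/
theorem angular_coefficient_vanishes (a : ℝ → ℝ)
    (ha0 : a 0 = 0)
    (heven : ∀ t, a (-t) = a t)
    (hmono : StrictMonoOn a (Set.Ici 0))
    (hcont : ContinuousOn a (Set.Ici 0))
    (hsmooth : ContDiffOn ℝ 2 a (Set.Ioi 0))
    (hreg : ∀ t > (0:ℝ), a t * deriv (deriv a) t / (deriv a t) ^ 2 ≤ 1)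
    (hcase :
      (∃ L : ℝ, 0 < L ∧
        Filter.Tendsto (deriv a) (nhdsWithin 0 (Set.Ioi 0)) (nhds L)) ∨
      (Filter.Tendsto (deriv a) (nhdsWithin 0 (Set.Ioi 0)) (nhds 0) ∧
        ∃ n : ℕ, iteratedDeriv n a 0 ≠ 0)) :
    ∀ τ > (0:ℝ),
      Filter.Tendsto
        (fun t₀ => a t₀ * ∫ t in t₀..τ,
          (1 / a t) * (a τ / Real.sqrt ((a τ) ^ 2 - (a t) ^ 2)))
        (nhdsWithin 0 (Set.Ioi 0)) (nhds 0) :=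
  angular_coefficient_vanishes_general a ha0 hmono hcont hsmooth hreg
end
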